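/- arXiv:2508.05917 — 12 statements merged into one kernel-verified Lean document; each statement's English description precedes it below -/
import Mathlib

section
/- Let I be a totally ordered set and let α, β be finitely supported functions I → ℤ≥0 of positive size (size = sum of values), ordered by: α > β iff |α| > |β|, or |α| = |β| and at the first index i where they differ, α_i > β_i. For α of positive size, let ht(α) be the largest index k with α_k ≠ 0 and set α̂ = α - ε_{ht(α)} where ε_j is the indicator of j. Then α > β implies α̂ ≥ β̂, and equality α̂ = β̂ holds if and only if there exists some j > ht(α) such that β = α̂ + ε_j. -/
/-- The size of a finitely supported function `I →₀ ℕ`: the sum of its values. -/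
def qwSize {I : Type*} (α : I →₀ ℕ) : ℕ := α.sum fun _ n => n

/-- The order `α > β` iff `|α| > |β|`, or the sizes agree and there is an index `i`
with `α i > β i` and `α j = β j` for all `j < i`. -/
def qwGT {I : Type*} [LinearOrder I] (α β : I →₀ ℕ) : Prop :=
  qwSize α > qwSize β ∨
    (qwSize α = qwSize β ∧ ∃ i, α i > β i ∧ ∀ j < i, α j = β j)

/-- The height of a nonzero `α : I →₀ ℕ`: the largest index at which `α` is nonzero. -/
noncomputable def qwHt {I : Type*} [LinearOrder I] (α : I →₀ ℕ) (h : 0 < qwSize α) : I :=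
  α.support.max' (by
    rw [Finsupp.support_nonempty_iff]
    rintro rfl
    simp [qwSize] at h)

/-- `α̂ = α - ε_{ht α}`. -/
noncomputable def qwHat {I : Type*} [LinearOrder I] (α : I →₀ ℕ) (h : 0 < qwSize α) :
    I →₀ ℕ :=
  α - Finsupp.single (qwHt α h) 1

section Aux

variable {I : Type*} [LinearOrder I]

lemma qwSize_eq_sum (α : I →₀ ℕ) : qwSize α = ∑ x ∈ α.support, α x := rfl

lemma qwSize_eq_sum_of_subset (α : I →₀ ℕ) {s : Finset I} (hs : α.support ⊆ s) :
    qwSize α = ∑ x ∈ s, α x := by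
  rw [qwSize_eq_sum]
  exact Finset.sum_subset hs fun x _ hx => Finsupp.notMem_support_iff.mp hx

lemma qwSize_lt_of_le {α β : I →₀ ℕ} (h : ∀ k, α k ≤ β k) {i : I} (hi : α i < β i) :
    qwSize α < qwSize β := by
  have hβi : i ∈ α.support ∪ β.support :=
    Finset.mem_union_right _ (Finsupp.mem_support_iff.mpr (by omega))
  rw [qwSize_eq_sum_of_subset α Finset.subset_union_left,
      qwSize_eq_sum_of_subset β Finset.subset_union_right]
  exact Finset.sum_lt_sum (fun x _ => h x) ⟨i, hβi, hi⟩

lemma qw_eq_of_le_of_size_eq {α β : I →₀ ℕ} (h : ∀ k, α k ≤ β k)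
    (hs : qwSize α = qwSize β) : α = β := by
  ext k
  by_contra hk
  exact absurd hs (Nat.ne_of_lt (qwSize_lt_of_le h (lt_of_le_of_ne (h k) hk)))

lemma le_qwHt (α : I →₀ ℕ) (h : 0 < qwSize α) {j : I} (hj : α j ≠ 0) : j ≤ qwHt α h :=
  Finset.le_max' _ _ (Finsupp.mem_support_iff.mpr hj)

lemma one_le_apply_qwHt (α : I →₀ ℕ) (h : 0 < qwSize α) : 1 ≤ α (qwHt α h) := by
  have := Finset.max'_mem α.support (α := I) (by
    rw [Finsupp.support_nonempty_iff]
    rintro rfl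
    simp [qwSize] at h)
  have h2 : α (qwHt α h) ≠ 0 := Finsupp.mem_support_iff.mp this
  omega

lemma qwHat_apply (α : I →₀ ℕ) (h : 0 < qwSize α) (j : I) :
    qwHat α h j = α j - if j = qwHt α h then 1 else 0 := by
  rw [qwHat, Finsupp.tsub_apply, Finsupp.single_apply]
  simp [eq_comm]

lemma qwHat_add_single (α : I →₀ ℕ) (h : 0 < qwSize α) :
    qwHat α h + Finsupp.single (qwHt α h) 1 = α := by
  ext j
  rw [Finsupp.add_apply, qwHat_apply, Finsupp.single_apply]
  have := one_le_apply_qwHt α h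
  by_cases hj : j = qwHt α h
  · subst hj; simp; omega
  · simp [hj, Ne.symm hj]

lemma qwSize_add (α β : I →₀ ℕ) : qwSize (α + β) = qwSize α + qwSize β := by
  simpa [qwSize] using Finsupp.sum_add_index' (h := fun (_ : I) (n : ℕ) => n)
    (fun _ => rfl) (fun _ _ _ => rfl) (f := α) (g := β)

lemma qwSize_single (j : I) : qwSize (Finsupp.single j 1) = 1 := by
  simp [qwSize, Finsupp.sum_single_index]

lemma qwSize_hat (α : I →₀ ℕ) (h : 0 < qwSize α) :
    qwSize (qwHat α h) + 1 = qwSize α := by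
  conv_rhs => rw [← qwHat_add_single α h]
  rw [qwSize_add, qwSize_single]

lemma qwHat_eq_of (β : I →₀ ℕ) (hβ : 0 < qwSize β) (γ : I →₀ ℕ) (j : I)
    (hb : β = γ + Finsupp.single j 1) (hγ : ∀ k, γ k ≠ 0 → k ≤ j) :
    qwHt β hβ = j ∧ qwHat β hβ = γ := by
  have hj : qwHt β hβ = j := by
    apply le_antisymm
    · apply Finset.max'_le
      intro y hy
      rw [hb] at hy
      rcases Finset.mem_union.mp (Finsupp.support_add hy) with h1 | h1
      · exact hγ y (Finsupp.mem_support_iff.mp h1)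
      · exact le_of_eq (Finset.mem_singleton.mp (Finsupp.support_single_subset h1))
    · apply le_qwHt
      rw [hb]
      simp
  refine ⟨hj, ?_⟩
  rw [qwHat, hj, hb]
  ext k
  rw [Finsupp.tsub_apply, Finsupp.add_apply, Finsupp.single_apply]
  by_cases hk : j = k <;> simp [hk]

end Aux

theorem stmt0 {I : Type*} [LinearOrder I] (α β : I →₀ ℕ)
    (hα : 0 < qwSize α) (hβ : 0 < qwSize β) (h : qwGT α β) :
    (qwGT (qwHat α hα) (qwHat β hβ) ∨ qwHat α hα = qwHat β hβ) ∧
      (qwHat α hα = qwHat β hβ ↔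
        ∃ j, qwHt α hα < j ∧ β = qwHat α hα + Finsupp.single j 1) := by
  have hszα := qwSize_hat α hα
  have hszβ := qwSize_hat β hβ
  have haz : ∀ k, qwHt α hα < k → α k = 0 := by
    intro k hk
    by_contra h0
    exact absurd (le_qwHt α hα h0) (not_le.mpr hk)
  have hbz : ∀ k, qwHt β hβ < k → β k = 0 := by
    intro k hk
    by_contra h0
    exact absurd (le_qwHt β hβ h0) (not_le.mpr hk)
  -- backward helper
  have P1 : ∀ j, qwHt α hα < j → β = qwHat α hα + Finsupp.single j 1 →
      qwHat β hβ = qwHat α hα := by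
    intro j hj hbj
    refine (qwHat_eq_of β hβ (qwHat α hα) j hbj ?_).2
    intro k hk
    rw [qwHat_apply] at hk
    have hαk : α k ≠ 0 := by omega
    exact le_of_lt (lt_of_le_of_lt (le_qwHt α hα hαk) hj)
  rcases h with hsz | ⟨hsz, i, hi, hlt⟩
  · -- strict size case
    constructor
    · left; left; omega
    · constructor
      · intro he
        have : qwSize (qwHat α hα) = qwSize (qwHat β hβ) := by rw [he]
        omega
      · rintro ⟨j, hj, hbj⟩
        have : qwSize β = qwSize (qwHat α hα) + 1 := by
          rw [hbj, qwSize_add, qwSize_single]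
        omega
  · -- equal size, lex case
    have hia : i ≤ qwHt α hα := le_qwHt α hα (by omega)
    have hib : i < qwHt β hβ := by
      by_contra hc
      push_neg at hc
      have hle : ∀ k, β k ≤ α k := by
        intro k
        rcases lt_trichotomy k i with h1 | h1 | h1
        · exact (hlt k h1).ge
        · subst h1; exact hi.le
        · rw [hbz k (lt_of_le_of_lt hc h1)]; exact Nat.zero_le _
      exact absurd hsz (Nat.ne_of_gt (qwSize_lt_of_le hle hi))
    have hbhat_i : qwHat β hβ i = β i := by
      rw [qwHat_apply, if_neg (ne_of_lt hib)]
      omega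
    have hlow : ∀ j < i, qwHat α hα j = qwHat β hβ j := by
      intro j hj
      rw [qwHat_apply, qwHat_apply, if_neg (ne_of_lt (lt_of_lt_of_le hj hia)),
        if_neg (ne_of_lt (hj.trans hib)), hlt j hj]
    have STRICT : qwHat β hβ i < qwHat α hα i →
        (qwGT (qwHat α hα) (qwHat β hβ) ∨ qwHat α hα = qwHat β hβ) ∧
          (qwHat α hα = qwHat β hβ ↔
            ∃ j, qwHt α hα < j ∧ β = qwHat α hα + Finsupp.single j 1) := by
      intro hgt
      have hne : qwHat α hα ≠ qwHat β hβ := by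
        intro he
        rw [he] at hgt
        exact lt_irrefl _ hgt
      refine ⟨Or.inl (Or.inr ⟨by omega, i, hgt, hlow⟩), ?_, ?_⟩
      · intro he; exact absurd he hne
      · rintro ⟨j, hj, hbj⟩
        exact absurd (P1 j hj hbj).symm hne
    by_cases hic : qwHt α hα = i
    · have hAi : qwHat α hα i = α i - 1 := by
        rw [qwHat_apply, if_pos hic.symm]
      rcases Nat.lt_or_ge (β i) (α i - 1) with hgt | hge
      · exact STRICT (by omega)
      · -- equality case
        have heqi : β i = α i - 1 := by omega
        have heq : qwHat α hα = qwHat β hβ := by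
          apply qw_eq_of_le_of_size_eq
          · intro k
            rcases lt_trichotomy k i with h1 | h1 | h1
            · exact (hlow k h1).le
            · subst h1
              rw [hAi, hbhat_i]
              omega
            · have h0 : α k = 0 := haz k (hic ▸ h1)
              rw [qwHat_apply, h0]
              simp
          · omega
        refine ⟨Or.inr heq, iff_of_true heq ⟨qwHt β hβ, hic ▸ hib, ?_⟩⟩
        rw [heq]
        exact (qwHat_add_single β hβ).symm
    · apply STRICT
      have h1 : i < qwHt α hα := lt_of_le_of_ne hia (fun he => hic he.symm)
      rw [hbhat_i, qwHat_apply, if_neg (ne_of_lt h1)]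
      omega
end

section
/- Let 𝔤 be a Lie algebra, 𝔭 a solvable ideal of 𝔤, and V an irreducible 𝔤-module. If V is a locally finite 𝔭-module (every vector generates a finite-dimensional 𝔭-submodule), then V contains a nonzero vector w and a linear functional φ : 𝔭 → ℂ such that p·w = φ(p)w for all p ∈ 𝔭; in particular V is generated as a 𝔤-module by a common eigenvector for 𝔭. -/
open LieAlgebra LieModule

attribute [local instance 100] LieRing.ofAssociativeRing

section Key
variable {L : Type*} [LieRing L] [LieAlgebra ℂ L]
  {M : Type*} [AddCommGroup M] [Module ℂ M] [LieRingModule L M] [LieModule ℂ L M]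
  [FiniteDimensional ℂ M]

lemma chi_bracket_eq_zero (I : LieIdeal ℂ L) (χ : I → ℂ) (w : M) (hw : w ≠ 0)
    (hweight : ∀ a : I, ⁅(a : L), w⁆ = χ a • w)
    (x : L) (a₀ : I) (c : I) (hc : (c : L) = ⁅(a₀ : L), x⁆) : χ c = 0 := by
  classical
  set f : Module.End ℂ M := toEnd ℂ L M x with hf
  set u : ℕ → M := fun j => (f ^ j) w with hu
  set Uj : ℕ → Submodule ℂ M := fun j => Submodule.span ℂ (u '' Set.Iio j) with hUj
  have hu0 : u 0 = w := by simp [hu]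
  have hfu : ∀ i, f (u i) = u (i + 1) := by
    intro i; simp [hu, pow_succ', Module.End.mul_apply]
  have husucc : ∀ j, u (j + 1) = ⁅x, u j⁆ := by
    intro j; rw [← hfu]; simp [hf, toEnd_apply_apply]
  have hmono : Monotone Uj := fun i j hij =>
    Submodule.span_mono (Set.image_mono (Set.Iio_subset_Iio hij))
  have humem : ∀ j, u j ∈ Uj (j + 1) :=
    fun j => Submodule.subset_span ⟨j, Nat.lt_succ_self j, rfl⟩
  -- key triangularity
  have key3 : ∀ (j : ℕ) (a : I), ⁅(a : L), u j⁆ - χ a • u j ∈ Uj j := by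
    intro j
    induction j with
    | zero =>
      intro a; rw [hu0, hweight, sub_self]; exact zero_mem _
    | succ j ih =>
      intro a
      have ha' : ⁅(a : L), x⁆ ∈ I := by
        have h1 : ⁅x, (a : L)⁆ ∈ I := I.lie_mem a.2
        rw [← lie_skew]; exact neg_mem h1
      set b : I := ⟨⁅(a : L), x⁆, ha'⟩ with hbdef
      have hT : ⁅(a : L), u (j + 1)⁆ - χ a • u (j + 1)
          = ((⁅(b : L), u j⁆ - χ b • u j) + χ b • u j)
            + ⁅x, ⁅(a : L), u j⁆ - χ a • u j⁆ := by
        rw [husucc j, leibniz_lie, lie_sub, lie_smul]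
        abel
      rw [hT]
      refine Submodule.add_mem _ (Submodule.add_mem _
        (hmono (Nat.le_succ j) (ih b))
        (Submodule.smul_mem _ _ (humem j))) ?_
      -- ⁅x, r⁆ ∈ Uj (j+1) for r ∈ Uj j
      have hmap : (Uj j).map f ≤ Uj (j + 1) := by
        rw [hUj, Submodule.map_span]
        apply Submodule.span_le.mpr
        rintro y ⟨-, ⟨i, hi, rfl⟩, rfl⟩
        rw [hfu i]
        exact Submodule.subset_span ⟨i + 1, Nat.succ_lt_succ hi, rfl⟩
      have : f (⁅(a : L), u j⁆ - χ a • u j) ∈ Uj (j + 1) :=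
        hmap ⟨_, ih a, rfl⟩
      simpa [hf, toEnd_apply_apply] using this
  -- stabilization
  obtain ⟨D, hD'⟩ := monotone_stabilizes_iff_noetherian.mpr inferInstance (⟨Uj, hmono⟩ : ℕ →o Submodule ℂ M)
  have hD : ∀ m, D ≤ m → Uj D = Uj m := fun m hm => hD' m hm
  set hA : ↥I → Module.End ℂ M :=
    (fun a => toEnd ℂ L M (a : L) - χ a • (LinearMap.id : M →ₗ[ℂ] M)) with hhA
  set U : Submodule ℂ M := Uj D with hUdef
  have hall : ∀ j, u j ∈ U := by
    intro j
    have h1 : u j ∈ Uj (max (j + 1) D) := hmono (le_max_left _ _) (humem j)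
    rwa [← hD _ (le_max_right _ _)] at h1
  -- f-invariance of U
  have hfUU : ∀ m ∈ U, f m ∈ U := by
    intro m hm
    have hmap : U.map f ≤ U := by
      rw [hUdef, hUj, Submodule.map_span]
      apply Submodule.span_le.mpr
      rintro y ⟨-, ⟨i, hi, rfl⟩, rfl⟩
      rw [hfu i]; exact hall (i + 1)
    exact hmap ⟨m, hm, rfl⟩
  -- "shifted" maps send Uj (j+1) into Uj j
  have hAmap : ∀ (a : I) (j : ℕ),
      (Uj (j + 1)).map (hA a) ≤ Uj j := by
    intro a j
    conv_lhs => rw [hUj]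
    rw [Submodule.map_span]
    apply Submodule.span_le.mpr
    rintro y ⟨-, ⟨i, hi, rfl⟩, rfl⟩
    have h2 : hA a (u i) = ⁅(a : L), u i⁆ - χ a • u i := by
      simp [hhA, toEnd_apply_apply]
    rw [h2]
    exact hmono (Nat.lt_succ_iff.mp hi) (key3 i a)
  -- a-invariance of U
  have haUU : ∀ (a : I), ∀ m ∈ U, (toEnd ℂ L M (a : L)) m ∈ U := by
    intro a m hm
    have hm' : m ∈ Uj (D + 1) := by rwa [← hD _ (Nat.le_succ D)]
    have h1 : hA a m ∈ U := hAmap a D ⟨m, hm', rfl⟩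
    have h2 : (toEnd ℂ L M (a : L)) m = hA a m + χ a • m := by
      simp [hhA]
    rw [h2]
    exact Submodule.add_mem _ h1 (Submodule.smul_mem _ _ hm)
  set Fx : Module.End ℂ U := f.restrict hfUU with hFx
  have htrace : ∀ a : I,
      LinearMap.trace ℂ U ((toEnd ℂ L M (a : L)).restrict (haUU a))
        = χ a * (Module.finrank ℂ U : ℂ) := by
    intro a
    set Ga : Module.End ℂ U := (toEnd ℂ L M (a : L)).restrict (haUU a) with hGa
    have hnilcoe : ∀ (m : U), ((Ga - χ a • 1) m : M) = hA a (m : M) := by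
      intro m
      simp [hGa, hhA, LinearMap.restrict_apply]
    have hnil : IsNilpotent (Ga - χ a • (1 : Module.End ℂ U)) := by
      refine ⟨D, ?_⟩
      have hzero : ∀ (j : ℕ) (m : U), (m : M) ∈ Uj j → ((Ga - χ a • 1) ^ j) m = 0 := by
        intro j
        induction j with
        | zero =>
          intro m hm
          have hio : (Set.Iio 0 : Set ℕ) = ∅ := by ext t; simp
          rw [hUj] at hm
          simp only [hio, Set.image_empty, Submodule.span_empty, Submodule.mem_bot] at hm
          have hm0 : m = 0 := Subtype.ext hm
          simp [hm0]
        | succ j ih =>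
          intro m hm
          rw [pow_succ, Module.End.mul_apply]
          apply ih
          rw [hnilcoe]
          exact hAmap a j ⟨(m : M), hm, rfl⟩
      ext m
      exact congrArg Subtype.val (hzero D m m.2)
    have hsplit : Ga = χ a • 1 + (Ga - χ a • 1) := by abel
    rw [hsplit, map_add, (LinearMap.isNilpotent_trace_of_isNilpotent hnil).eq_zero,
      add_zero, map_smul, LinearMap.trace_one]
    simp [mul_comm]
  -- trace of the commutator is zero
  have hcU : ∀ m ∈ U, (toEnd ℂ L M (c : L)) m ∈ U := haUU c
  have hcomm : (toEnd ℂ L M (c : L)).restrict (haUU c)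
      = (toEnd ℂ L M ((a₀ : I) : L)).restrict (haUU a₀) * Fx
        - Fx * (toEnd ℂ L M ((a₀ : I) : L)).restrict (haUU a₀) := by
    ext m
    simp only [LinearMap.sub_apply, Module.End.mul_apply, AddSubgroupClass.coe_sub,
      hFx, LinearMap.restrict_coe_apply]
    rw [hc]
    simp [toEnd_apply_apply, hf, lie_lie]
  have h0 : LinearMap.trace ℂ U ((toEnd ℂ L M (c : L)).restrict (haUU c)) = 0 := by
    rw [hcomm, map_sub, LinearMap.trace_mul_comm, sub_self]
  have hfr : (Module.finrank ℂ U : ℂ) ≠ 0 := by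
    have hnt : Nontrivial U := ⟨⟨⟨w, hall 0⟩, 0, by simp [hw, Subtype.ext_iff]⟩⟩
    exact_mod_cast (Nat.cast_ne_zero (R := ℂ)).mpr Module.finrank_pos.ne'
  have := htrace c
  rw [h0] at this
  exact (mul_eq_zero.mp this.symm).resolve_right hfr

lemma weight_space_invariant (I : LieIdeal ℂ L) (χ : I → ℂ) (x : L) (m : M)
    (hweight : ∀ a : I, ⁅(a : L), m⁆ = χ a • m) :
    ∀ a : I, ⁅(a : L), ⁅x, m⁆⁆ = χ a • ⁅x, m⁆ := by
  intro a
  by_cases hm : m = 0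
  · simp [hm]
  · have ha' : ⁅(a : L), x⁆ ∈ I := by
      rw [← lie_skew]; exact neg_mem (I.lie_mem a.2)
    set b : I := ⟨⁅(a : L), x⁆, ha'⟩ with hb
    have hb0 : χ b = 0 := chi_bracket_eq_zero I χ m hm hweight x a b rfl
    calc ⁅(a : L), ⁅x, m⁆⁆ = ⁅(b : L), m⁆ + ⁅x, ⁅(a : L), m⁆⁆ := leibniz_lie _ _ _
    _ = χ b • m + χ a • ⁅x, m⁆ := by rw [hweight b, hweight a, lie_smul]
    _ = χ a • ⁅x, m⁆ := by rw [hb0, zero_smul, zero_add]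

end Key

universe u v

theorem lieTheoremAux (n : ℕ) :
    ∀ {L : Type u} [LieRing L] [LieAlgebra ℂ L] (M : Type v) [AddCommGroup M]
      [Module ℂ M] [LieRingModule L M] [LieModule ℂ L M] [FiniteDimensional ℂ M]
      [Nontrivial M], derivedSeries ℂ L n = ⊥ →
      ∃ v : M, v ≠ 0 ∧ ∃ χ : L → ℂ, ∀ x : L, ⁅x, v⁆ = χ x • v := by
  induction n with
  | zero =>
    intro L _ _ M _ _ _ _ _ _ hder
    obtain ⟨v, hv⟩ := exists_ne (0 : M)
    refine ⟨v, hv, 0, fun x => ?_⟩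
    have hx : x ∈ derivedSeries ℂ L 0 := LieSubmodule.mem_top x
    rw [hder, LieSubmodule.mem_bot] at hx
    simp [hx]
  | succ n ih =>
    intro L _ _ M _ _ _ _ _ _ hder
    set I : LieIdeal ℂ L := derivedSeries ℂ L 1 with hI
    have hIder : derivedSeries ℂ ↥I n = ⊥ := by
      rw [LieIdeal.derivedSeries_eq_bot_iff, hI, derivedSeries_def,
        ← derivedSeriesOfIdeal_add]
      exact hder
    obtain ⟨v₀, hv₀, χ, hχ⟩ := ih M hIder
    have hχ' : ∀ a : ↥I, ⁅(a : L), v₀⁆ = χ a • v₀ := fun a => hχ a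
    set A : LieSubmodule ℂ L M :=
      { carrier := {m : M | ∀ a : ↥I, ⁅(a : L), m⁆ = χ a • m}
        add_mem' := fun {p q} hp hq a => by rw [lie_add, hp a, hq a, smul_add]
        zero_mem' := fun a => by simp
        smul_mem' := fun t {p} hp a => by rw [lie_smul, hp a, smul_comm]
        lie_mem := fun {x p} hp => weight_space_invariant I χ x p hp } with hA
    have hv₀A : v₀ ∈ A := hχ'
    haveI hAnt : Nontrivial ↥A := ⟨⟨v₀, hv₀A⟩, 0, by simp [hv₀]⟩
    -- every element of I acts on A as a scalar
    have hsc : ∀ c : ↥I, toEnd ℂ L ↥A (c : L) = χ c • (1 : Module.End ℂ ↥A) := by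
      intro c
      ext m
      have := m.2 c
      simpa [toEnd_apply_apply] using this
    -- brackets act as zero on A
    have hbr0 : ∀ x y : L, toEnd ℂ L ↥A ⁅x, y⁆ = 0 := by
      intro x y
      have hxyI : ⁅x, y⁆ ∈ I := by
        rw [hI, derivedSeries_def, derivedSeriesOfIdeal_succ, derivedSeriesOfIdeal_zero]
        exact LieSubmodule.lie_mem_lie (LieSubmodule.mem_top x) (LieSubmodule.mem_top y)
      set c : ↥I := ⟨⁅x, y⁆, hxyI⟩ with hcdef
      have h1 : toEnd ℂ L ↥A ⁅x, y⁆ = χ c • 1 := hsc c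
      have htr : LinearMap.trace ℂ ↥A (toEnd ℂ L ↥A ⁅x, y⁆) = 0 := by
        rw [LieHom.map_lie, Ring.lie_def, map_sub, LinearMap.trace_mul_comm, sub_self]
      rw [h1, map_smul, LinearMap.trace_one] at htr
      have hfr : (Module.finrank ℂ ↥A : ℂ) ≠ 0 :=
        (Nat.cast_ne_zero (R := ℂ)).mpr Module.finrank_pos.ne'
      have hc0 : χ c = 0 := by
        have := htr
        simp only [smul_eq_mul] at this
        exact (mul_eq_zero.mp this).resolve_right hfr
      rw [h1, hc0, zero_smul]
    -- the image of L in End(A) is an abelian Lie subalgebra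
    set E : LieSubalgebra ℂ (Module.End ℂ ↥A) := (toEnd ℂ L ↥A).range with hE
    haveI : IsLieAbelian ↥E := by
      constructor
      rintro ⟨f, hf⟩ ⟨g, hg⟩
      obtain ⟨x, rfl⟩ := hf
      obtain ⟨y, rfl⟩ := hg
      apply Subtype.ext
      have h2 : ⁅toEnd ℂ L ↥A x, toEnd ℂ L ↥A y⁆ = toEnd ℂ L ↥A ⁅x, y⁆ :=
        (LieHom.map_lie _ _ _).symm
      rw [LieSubalgebra.coe_bracket]
      show ⁅toEnd ℂ L ↥A x, toEnd ℂ L ↥A y⁆ = _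
      rw [h2, hbr0 x y]
      simp
    obtain ⟨χ₂, hχ₂⟩ : ∃ χf : ↥E → ℂ, genWeightSpace ↥A χf ≠ ⊥ := by
      by_contra h
      push_neg at h
      have h3 := iSup_genWeightSpace_eq_top ℂ ↥E ↥A
      simp only [h, iSup_bot] at h3
      exact absurd (h3 ▸ (LieSubmodule.mem_top (⟨v₀, hv₀A⟩ : ↥A)))
        (by simp [LieSubmodule.mem_bot, hv₀, Subtype.ext_iff])
    obtain ⟨v, hv0, hveq⟩ := exists_forall_lie_eq_smul ℂ ↥E ↥A ⟨χ₂, hχ₂⟩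
    refine ⟨(v : M), fun h => hv0 (Subtype.ext h), 
      fun x => χ₂ ⟨toEnd ℂ L ↥A x, LieHom.mem_range_self _ x⟩, fun x => ?_⟩
    have h1 := hveq ⟨toEnd ℂ L ↥A x, LieHom.mem_range_self _ x⟩
    have h2 := congrArg (Subtype.val : ↥A → M) h1
    simpa [LieSubalgebra.coe_bracket_of_module, lie_eq_smul, toEnd_apply_apply] using h2

theorem stmt4 {L : Type*} [LieRing L] [LieAlgebra ℂ L] (𝔭 : LieIdeal ℂ L)
    (hsolv : LieAlgebra.IsSolvable 𝔭)
    (V : Type*) [AddCommGroup V] [Module ℂ V] [LieRingModule L V] [LieModule ℂ L V]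
    [Nontrivial V]
    (hirr : ∀ N : LieSubmodule ℂ L V, N = ⊥ ∨ N = ⊤)
    (hlocfin : ∀ v : V, ∃ W : Submodule ℂ V, v ∈ W ∧ FiniteDimensional ℂ W ∧
      ∀ p ∈ 𝔭, ∀ w ∈ W, ⁅p, w⁆ ∈ W) :
    ∃ w : V, w ≠ 0 ∧ (∃ φ : 𝔭 →ₗ[ℂ] ℂ, ∀ p : 𝔭, ⁅(p : L), w⁆ = φ p • w) ∧
      ∀ N : LieSubmodule ℂ L V, w ∈ N → N = ⊤ := by
  obtain ⟨n, hn⟩ := LieAlgebra.IsSolvable.solvable ℂ 𝔭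
  obtain ⟨v₁, hv₁⟩ := exists_ne (0 : V)
  obtain ⟨W, hvW, hWfd, hWinv⟩ := hlocfin v₁
  letI : LieRingModule ↥𝔭 ↥W :=
    { bracket := fun p w => ⟨⁅(p : L), (w : V)⁆, hWinv p p.2 w w.2⟩
      add_lie := fun p q w => by
        apply Subtype.ext
        show ⁅((p + q : ↥𝔭) : L), (w : V)⁆ = ⁅(p : L), (w : V)⁆ + ⁅(q : L), (w : V)⁆
        rw [Submodule.coe_add, add_lie]
      lie_add := fun p w₁ w₂ => by
        apply Subtype.ext
        show ⁅(p : L), ((w₁ + w₂ : ↥W) : V)⁆ = ⁅(p : L), (w₁ : V)⁆ + ⁅(p : L), (w₂ : V)⁆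
        rw [Submodule.coe_add, lie_add]
      leibniz_lie := fun p q w => by
        apply Subtype.ext
        show ⁅(p : L), ⁅(q : L), (w : V)⁆⁆
            = ⁅((⁅p, q⁆ : ↥𝔭) : L), (w : V)⁆ + ⁅(q : L), ⁅(p : L), (w : V)⁆⁆
        have hc : ((⁅p, q⁆ : ↥𝔭) : L) = ⁅(p : L), (q : L)⁆ := rfl
        rw [hc, leibniz_lie] }
  letI : LieModule ℂ ↥𝔭 ↥W :=
    { smul_lie := fun t p w => by
        apply Subtype.ext
        show ⁅((t • p : ↥𝔭) : L), (w : V)⁆ = t • ⁅(p : L), (w : V)⁆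
        rw [Submodule.coe_smul, smul_lie]
      lie_smul := fun t p w => by
        apply Subtype.ext
        show ⁅(p : L), ((t • w : ↥W) : V)⁆ = t • ⁅(p : L), (w : V)⁆
        rw [Submodule.coe_smul, lie_smul] }
  haveI : Nontrivial ↥W := ⟨⟨v₁, hvW⟩, 0, by simp [Subtype.ext_iff, hv₁]⟩
  haveI : FiniteDimensional ℂ ↥W := hWfd
  obtain ⟨w', hw'0, χ, hχ⟩ := lieTheoremAux n ↥W hn
  set w : V := (w' : V) with hwdef
  have hw : w ≠ 0 := fun h => hw'0 (Subtype.ext h)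
  have hkey : ∀ p : ↥𝔭, ⁅(p : L), w⁆ = χ p • w := by
    intro p
    have := congrArg (Subtype.val : ↥W → V) (hχ p)
    exact this
  have hinj : Function.Injective fun c : ℂ => c • w := smul_left_injective ℂ hw
  refine ⟨w, hw, ⟨⟨⟨⟨fun p => χ p, fun p q => hinj ?_⟩, fun t p => hinj ?_⟩, hkey⟩, ?_⟩⟩
  · show (χ (p + q)) • w = (χ p + χ q) • w
    rw [← hkey, add_smul, ← hkey, ← hkey]
    show ⁅((p : L) + (q : L)), w⁆ = _
    rw [add_lie]
  · show (χ (t • p)) • w = (t • χ p) • w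
    rw [← hkey, smul_eq_mul, mul_smul, ← hkey]
    show ⁅(t • (p : L)), w⁆ = _
    rw [smul_lie]
  · intro N hN
    rcases hirr N with h | h
    · rw [h, LieSubmodule.mem_bot] at hN
      exact absurd hN hw
    · exact h
end

section
/- Let 𝔤 be a Lie algebra, 𝔭 an ideal, φ : 𝔭 → ℂ a nonzero Lie algebra homomorphism, and W(φ) = U(𝔤) ⊗_{U(𝔭)} ℂw_φ the universal quasi-Whittaker module, where 𝔭 acts on ℂw_φ via φ. If w ∈ W(φ) is a nonzero vector and ψ : 𝔭 → ℂ is a Lie algebra homomorphism such that p·w = ψ(p)w for all p ∈ 𝔭, then ψ = φ. That is, every nonzero quasi-Whittaker vector in W(φ) has type φ. -/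
open UniversalEnvelopingAlgebra

section aux
attribute [local instance 100] LieRing.ofAssociativeRing
variable {L : Type*} [LieRing L] [LieAlgebra ℂ L]

noncomputable def Gs (L : Type*) [LieRing L] [LieAlgebra ℂ L] :
    Submodule ℂ (UniversalEnvelopingAlgebra ℂ L) :=
  Submodule.span ℂ (insert 1 (Set.range fun x : L => ι ℂ x))

noncomputable def Ps (𝔭 : LieIdeal ℂ L) : Submodule ℂ (UniversalEnvelopingAlgebra ℂ L) :=
  Submodule.map (ι ℂ).toLinearMap (𝔭 : Submodule ℂ L)

lemma one_mem_Gs : (1 : UniversalEnvelopingAlgebra ℂ L) ∈ Gs L :=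
  Submodule.subset_span (Set.mem_insert _ _)

lemma ι_mem_Gs (x : L) : ι ℂ x ∈ Gs L :=
  Submodule.subset_span (Set.mem_insert_of_mem _ ⟨x, rfl⟩)

lemma Ps_le_Gs (𝔭 : LieIdeal ℂ L) : Ps 𝔭 ≤ Gs L := by
  rintro _ ⟨q, _, rfl⟩
  exact ι_mem_Gs q

lemma Gs_pow_mono {m n : ℕ} (h : m ≤ n) : (Gs L) ^ m ≤ (Gs L) ^ n := by
  induction n with
  | zero => simp [Nat.le_zero.mp h]
  | succ n ih =>
    rcases Nat.lt_or_ge m (n+1) with h' | h'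
    · intro x hx
      rw [← mul_one x, pow_succ]
      exact Submodule.mul_mem_mul (ih (Nat.lt_succ_iff.mp h') hx) one_mem_Gs
    · have : m = n + 1 := le_antisymm h h'
      simp [this]

lemma exists_mem_Gs_pow (x : UniversalEnvelopingAlgebra ℂ L) : ∃ n, x ∈ (Gs L) ^ n := by
  obtain ⟨t, rfl⟩ := RingCon.mkₐ_surjective (α := ℂ) (ringCon ℂ L) x
  induction t using TensorAlgebra.induction with
  | algebraMap r =>
    refine ⟨0, ?_⟩
    rw [pow_zero]
    exact Submodule.mem_one.mpr ⟨r, ((mkAlgHom ℂ L).commutes r).symm⟩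
  | ι x =>
    exact ⟨1, by rw [pow_one]; exact ι_mem_Gs x⟩
  | mul a b ha hb =>
    obtain ⟨n, hn⟩ := ha; obtain ⟨m, hm⟩ := hb
    exact ⟨n + m, by rw [map_mul, pow_add]; exact Submodule.mul_mem_mul hn hm⟩
  | add a b ha hb =>
    obtain ⟨n, hn⟩ := ha; obtain ⟨m, hm⟩ := hb
    exact ⟨max n m, by
      rw [map_add]
      exact Submodule.add_mem _ (Gs_pow_mono (le_max_left n m) hn)
        (Gs_pow_mono (le_max_right n m) hm)⟩

lemma adG (𝔭 : LieIdeal ℂ L) (u : UniversalEnvelopingAlgebra ℂ L) (hu : u ∈ Gs L)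
    (q : L) (hq : q ∈ 𝔭) : ι ℂ q * u - u * ι ℂ q ∈ Ps 𝔭 := by
  induction hu using Submodule.span_induction with
  | mem x hx =>
    rcases hx with rfl | ⟨y, rfl⟩
    · simpa using (Ps 𝔭).zero_mem
    · have h1 : ι ℂ q * ι ℂ y - ι ℂ y * ι ℂ q = ι ℂ ⁅q, y⁆ := by
        rw [LieHom.map_lie, Ring.lie_def]
      rw [h1]
      have h2 : ⁅y, q⁆ ∈ 𝔭 := 𝔭.lie_mem hq
      have hmem : ⁅q, y⁆ ∈ 𝔭 := by
        rw [← lie_skew]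
        exact neg_mem h2
      exact ⟨⁅q, y⁆, hmem, rfl⟩
  | zero => simpa using (Ps 𝔭).zero_mem
  | add x y _ _ hx hy =>
    have h : ι ℂ q * (x + y) - (x + y) * ι ℂ q
        = (ι ℂ q * x - x * ι ℂ q) + (ι ℂ q * y - y * ι ℂ q) := by noncomm_ring
    rw [h]; exact add_mem hx hy
  | smul c x _ hx =>
    have h : ι ℂ q * (c • x) - (c • x) * ι ℂ q = c • (ι ℂ q * x - x * ι ℂ q) := by
      rw [mul_smul_comm, smul_mul_assoc, smul_sub]
    rw [h]; exact Submodule.smul_mem _ _ hx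

lemma PG_le (𝔭 : LieIdeal ℂ L) : Ps 𝔭 * Gs L ≤ Gs L * Ps 𝔭 ⊔ Gs L := by
  refine Submodule.mul_le.mpr ?_
  rintro _ ⟨q, hq, rfl⟩ b hb
  have h1 : (ι ℂ).toLinearMap q * b
      = b * ι ℂ q + (ι ℂ q * b - b * ι ℂ q) := by
    show ι ℂ q * b = _
    noncomm_ring
  rw [h1]
  exact add_mem (Submodule.mem_sup_left (Submodule.mul_mem_mul hb ⟨q, hq, rfl⟩))
    (Submodule.mem_sup_right (Ps_le_Gs 𝔭 (adG 𝔭 b hb q hq)))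

lemma adPow (𝔭 : LieIdeal ℂ L) (n : ℕ) (u : UniversalEnvelopingAlgebra ℂ L)
    (hu : u ∈ (Gs L) ^ (n + 1)) (q : L) (hq : q ∈ 𝔭) :
    ι ℂ q * u - u * ι ℂ q ∈ (Gs L) ^ n * Ps 𝔭 ⊔ (Gs L) ^ n := by
  induction n generalizing u with
  | zero =>
    rw [pow_one] at hu
    refine Submodule.mem_sup_left ?_
    rw [pow_zero, one_mul]
    exact adG 𝔭 u hu q hq
  | succ n ih =>
    rw [pow_succ] at hu
    refine Submodule.mul_induction_on hu ?_ ?_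
    · intro a ha b hb
      have key : ι ℂ q * (a * b) - a * b * ι ℂ q
          = (ι ℂ q * a - a * ι ℂ q) * b + a * (ι ℂ q * b - b * ι ℂ q) := by noncomm_ring
      rw [key]
      refine add_mem ?_ (Submodule.mem_sup_left (Submodule.mul_mem_mul ha (adG 𝔭 b hb q hq)))
      have hca := ih a ha
      rcases Submodule.mem_sup.mp hca with ⟨c1, hc1, c2, hc2, hc⟩
      rw [← hc, add_mul]
      refine add_mem ?_ ?_
      · have h3 : c1 * b ∈ (Gs L)^n * Ps 𝔭 * Gs L := Submodule.mul_mem_mul hc1 hb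
        rw [mul_assoc] at h3
        have h2 : (Gs L)^n * (Ps 𝔭 * Gs L) ≤ (Gs L)^(n+1) * Ps 𝔭 ⊔ (Gs L)^(n+1) := by
          refine le_trans (mul_le_mul_right (PG_le 𝔭) _) ?_
          rw [Submodule.mul_sup, ← mul_assoc, ← pow_succ]
        exact h2 h3
      · exact Submodule.mem_sup_right (by rw [pow_succ]; exact Submodule.mul_mem_mul hc2 hb)
    · intro x y hx hy
      have h : ι ℂ q * (x + y) - (x + y) * ι ℂ q
          = (ι ℂ q * x - x * ι ℂ q) + (ι ℂ q * y - y * ι ℂ q) := by noncomm_ring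
      rw [h]; exact add_mem hx hy

end aux

/-- Every nonzero quasi-Whittaker vector in the universal quasi-Whittaker module
`W(φ) = U(𝔤) ⊗_{U(𝔭)} ℂ w_φ` (realized as the quotient of `U(𝔤)` by the left ideal
generated by the elements `p - φ(p)`, `p ∈ 𝔭`) has type `φ`. -/
theorem stmt5 {L : Type*} [LieRing L] [LieAlgebra ℂ L] (𝔭 : LieIdeal ℂ L)
    (φ : 𝔭 →ₗ[ℂ] ℂ)
    (hφ : ∀ p q : 𝔭, φ ⟨⁅(p : L), (q : L)⁆, 𝔭.lie_mem q.2⟩ = 0)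
    (hφ0 : φ ≠ 0)
    (J : Submodule (UniversalEnvelopingAlgebra ℂ L) (UniversalEnvelopingAlgebra ℂ L))
    (hJ : J = Submodule.span (UniversalEnvelopingAlgebra ℂ L)
      {x | ∃ p : 𝔭, x = ι ℂ (p : L) - algebraMap ℂ (UniversalEnvelopingAlgebra ℂ L) (φ p)})
    (w : UniversalEnvelopingAlgebra ℂ L ⧸ J) (hw : w ≠ 0)
    (ψ : 𝔭 →ₗ[ℂ] ℂ)
    (hψ : ∀ p q : 𝔭, ψ ⟨⁅(p : L), (q : L)⁆, 𝔭.lie_mem q.2⟩ = 0)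
    (hqw : ∀ p : 𝔭, (ι ℂ (p : L)) • w = ψ p • w) :
    ψ = φ := by
  classical
  set U := UniversalEnvelopingAlgebra ℂ L
  let πc : U →ₗ[ℂ] U ⧸ J := J.mkQ.restrictScalars ℂ
  have hgen : ∀ p : 𝔭, ι ℂ (p : L) - algebraMap ℂ U (φ p) ∈ J := by
    intro p
    rw [hJ]
    exact Submodule.subset_span ⟨p, rfl⟩
  have hright : ∀ (v : U) (p : 𝔭), v * ι ℂ (p : L) - φ p • v ∈ J := by
    intro v p
    have h1 : v * (ι ℂ (p : L) - algebraMap ℂ U (φ p)) ∈ J := by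
      have := J.smul_mem v (hgen p)
      rwa [smul_eq_mul] at this
    have h2 : v * (ι ℂ (p : L) - algebraMap ℂ U (φ p)) = v * ι ℂ (p : L) - φ p • v := by
      rw [mul_sub, ← Algebra.commutes (φ p) v, ← Algebra.smul_def]
    rwa [h2] at h1
  have hmkQ : ∀ (v : U) (p : 𝔭), πc (v * ι ℂ (p : L)) = φ p • πc v := by
    intro v p
    have h1 : J.mkQ (v * ι ℂ (p : L) - φ p • v) = 0 := by
      rw [Submodule.mkQ_apply, Submodule.Quotient.mk_eq_zero]
      exact hright v p
    have h2 : J.mkQ (v * ι ℂ (p : L)) - J.mkQ (φ p • v) = 0 := by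
      rw [← map_sub]; exact h1
    have h3 : J.mkQ (φ p • v) = φ p • J.mkQ v := map_smul πc (φ p) v
    have h4 := sub_eq_zero.mp h2
    show J.mkQ (v * ι ℂ (p : L)) = φ p • J.mkQ v
    exact h4.trans h3
  have hsmul : ∀ (v : U) (p : 𝔭), (ι ℂ (p : L)) • (πc v) = πc (ι ℂ (p : L) * v) := by
    intro v p
    show (ι ℂ (p : L)) • (J.mkQ v) = J.mkQ (ι ℂ (p : L) * v)
    rw [← map_smul J.mkQ, smul_eq_mul]
  set Wim : ℕ → Submodule ℂ (U ⧸ J) := fun n => ((Gs L) ^ n).map πc with hWim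
  have hex : ∃ n, w ∈ Wim n := by
    obtain ⟨u, rfl⟩ := Submodule.mkQ_surjective J w
    obtain ⟨n, hn⟩ := exists_mem_Gs_pow u
    exact ⟨n, ⟨u, hn, rfl⟩⟩
  set n := Nat.find hex with hn_def
  have hn : w ∈ Wim n := Nat.find_spec hex
  obtain ⟨u, hu, hwu⟩ := hn
  have key : ∀ p : 𝔭, ψ p = φ p := by
    intro p
    match hnn : n, hu with
    | 0, hu =>
      rw [pow_zero] at hu
      obtain ⟨r, hr⟩ := Submodule.mem_one.mp hu
      have hcomm : ι ℂ (p : L) * u = u * ι ℂ (p : L) := by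
        rw [← hr]; exact (Algebra.commutes r _).symm
      have h1 : ψ p • w = φ p • w := by
        rw [← hqw p, ← hwu, hsmul, hcomm, hmkQ]
      have h2 : (ψ p - φ p) • w = 0 := by
        rw [sub_smul, h1, sub_self]
      rcases smul_eq_zero.mp h2 with h | h
      · exact sub_eq_zero.mp h
      · exact absurd h hw
    | (m+1), hu =>
      set c := ι ℂ (p : L) * u - u * ι ℂ (p : L) with hc_def
      have hc : c ∈ (Gs L) ^ m * Ps 𝔭 ⊔ (Gs L) ^ m := adPow 𝔭 m u hu (p : L) p.2
      have h1 : ψ p • w = φ p • w + πc c := by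
        rw [← hqw p, ← hwu, hsmul]
        have : ι ℂ (p : L) * u = u * ι ℂ (p : L) + c := by rw [hc_def]; noncomm_ring
        rw [this, map_add, hmkQ]
      have hmulim : ∀ x ∈ (Gs L) ^ m * Ps 𝔭, πc x ∈ Wim m := by
        intro x hx
        refine Submodule.mul_induction_on hx ?_ ?_
        · rintro v hv _ ⟨q, hq, rfl⟩
          letI : LieRing (UniversalEnvelopingAlgebra ℂ L) := LieRing.ofAssociativeRing
          rw [show πc (v * (ι ℂ).toLinearMap q) = φ ⟨q, hq⟩ • πc v from hmkQ v ⟨q, hq⟩]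
          exact Submodule.smul_mem _ _ ⟨v, hv, rfl⟩
        · intro x y hx hy
          rw [map_add]
          exact add_mem hx hy
      have h2 : πc c ∈ Wim m := by
        rcases Submodule.mem_sup.mp hc with ⟨c1, hc1, c2, hc2, hcc⟩
        rw [← hcc, map_add]
        exact add_mem (hmulim c1 hc1) ⟨c2, hc2, rfl⟩
      have h3 : (ψ p - φ p) • w ∈ Wim m := by
        rw [sub_smul, h1]
        simpa using h2
      by_contra hne
      have hne' : ψ p - φ p ≠ 0 := sub_ne_zero.mpr hne
      have : w ∈ Wim m := by
        have := Submodule.smul_mem (Wim m) (ψ p - φ p)⁻¹ h3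
        rwa [smul_smul, inv_mul_cancel₀ hne', one_smul] at this
      exact Nat.find_min hex (by omega) this
  exact LinearMap.ext key
end

section
/- Let 𝔤 be a Lie algebra that admits an irreducible quasi-Whittaker module V of type φ whose space of quasi-Whittaker vectors V_φ is one-dimensional (a 'bland' module). Then φ is extendable: there exists a Lie algebra homomorphism φ' : 𝔤^φ → ℂ restricting to φ on 𝔭. -/
/-- If `𝔤` admits a bland irreducible quasi-Whittaker module of type `φ`
(irreducible, generated by a quasi-Whittaker vector, with a one-dimensional space of
quasi-Whittaker vectors), then `φ` is extendable to a character of the Whittaker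
annihilator `𝔤^φ` (realized as a functional on `𝔤` vanishing on `[𝔤^φ,𝔤^φ]` and
restricting to `φ` on `𝔭`). -/
theorem stmt8 {L : Type*} [LieRing L] [LieAlgebra ℂ L] (𝔭 : LieIdeal ℂ L)
    (φ : 𝔭 →ₗ[ℂ] ℂ)
    (hφ : ∀ p q : 𝔭, φ ⟨⁅(p : L), (q : L)⁆, 𝔭.lie_mem q.2⟩ = 0)
    (G : Set L) (hG : G = {g : L | ∀ p : 𝔭, φ ⟨⁅g, (p : L)⁆, 𝔭.lie_mem p.2⟩ = 0})
    (V : Type*) [AddCommGroup V] [Module ℂ V] [LieRingModule L V] [LieModule ℂ L V]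
    (Vφ : Set V) (hVφ : Vφ = {v : V | ∀ p : 𝔭, ⁅(p : L), v⁆ = φ p • v})
    (hirr : ∀ N : LieSubmodule ℂ L V, N = ⊥ ∨ N = ⊤) [Nontrivial V]
    (hgen : ∃ v ∈ Vφ, v ≠ 0 ∧ ∀ N : LieSubmodule ℂ L V, v ∈ N → N = ⊤)
    (hbland : ∃ v₀ ∈ Vφ, v₀ ≠ 0 ∧ ∀ v ∈ Vφ, ∃ c : ℂ, v = c • v₀) :
    ∃ ψ : L →ₗ[ℂ] ℂ, (∀ a ∈ G, ∀ b ∈ G, ψ ⁅a, b⁆ = 0) ∧ ∀ p : 𝔭, ψ (p : L) = φ p := by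
  classical
  obtain ⟨v, hvVφ, hv0, hbl⟩ := hbland
  subst hVφ; subst hG
  have hvp : ∀ p : 𝔭, ⁅(p : L), v⁆ = φ p • v := hvVφ
  have uniq : ∀ c₁ c₂ : ℂ, c₁ • v = c₂ • v → c₁ = c₂ := fun c₁ c₂ h =>
    smul_left_injective ℂ hv0 h
  -- the "eigenvector" subspace
  set W : Submodule ℂ L :=
    { carrier := {g : L | ∃ c : ℂ, ⁅g, v⁆ = c • v}
      add_mem' := by
        rintro a b ⟨ca, ha⟩ ⟨cb, hb⟩
        exact ⟨ca + cb, by rw [add_lie, ha, hb, add_smul]⟩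
      zero_mem' := ⟨0, by simp⟩
      smul_mem' := by
        rintro t a ⟨c, ha⟩
        exact ⟨t * c, by rw [smul_lie, ha, smul_smul]⟩ } with hW
  have hchoose : ∀ (g : L) (hg : g ∈ W), ⁅g, v⁆ = (Classical.choose hg) • v :=
    fun g hg => Classical.choose_spec hg
  have hcval : ∀ (g : L) (hg : g ∈ W) (c : ℂ), ⁅g, v⁆ = c • v → Classical.choose hg = c := by
    intro g hg c hc
    exact uniq _ _ ((hchoose g hg).symm.trans hc)
  let f : W →ₗ[ℂ] ℂ :=
    { toFun := fun g => Classical.choose g.2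
      map_add' := by
        rintro ⟨a, ha⟩ ⟨b, hb⟩
        apply hcval
        show ⁅a + b, v⁆ = _
        rw [add_lie]
        conv_lhs => rw [hchoose a ha, hchoose b hb]
        rw [add_smul]
      map_smul' := by
        rintro t ⟨a, ha⟩
        simp only [RingHom.id_apply, smul_eq_mul]
        apply hcval
        show ⁅t • a, v⁆ = _
        rw [smul_lie]
        conv_lhs => rw [hchoose a ha]
        rw [smul_smul] }
  obtain ⟨W', hW'⟩ := Submodule.exists_isCompl W
  let π : L →ₗ[ℂ] W := Submodule.linearProjOfIsCompl W W' hW'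
  have hπ : ∀ (g : L) (hg : g ∈ W), π g = ⟨g, hg⟩ :=
    fun g hg => Submodule.linearProjOfIsCompl_apply_left hW' ⟨g, hg⟩
  refine ⟨f.comp π, ?_, ?_⟩
  · -- vanishing on brackets of annihilator elements
    intro a ha b hb
    -- a, b ∈ W
    have hmem : ∀ g : L, (∀ p : 𝔭, φ ⟨⁅g, (p : L)⁆, 𝔭.lie_mem p.2⟩ = 0) → g ∈ W := by
      intro g hg
      have h1 : ∀ p : 𝔭, ⁅(p : L), ⁅g, v⁆⁆ = φ p • ⁅g, v⁆ := by
        intro p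
        have hqmem : ⁅(p : L), g⁆ ∈ 𝔭 := by
          rw [← lie_skew]
          exact neg_mem (𝔭.lie_mem p.2)
        set q : 𝔭 := ⟨⁅(p : L), g⁆, hqmem⟩ with hq
        have hφq : φ q = 0 := by
          have : q = -⟨⁅g, (p : L)⁆, 𝔭.lie_mem p.2⟩ := by
            apply Subtype.ext
            show ⁅(p : L), g⁆ = -⁅g, (p : L)⁆
            rw [← lie_skew]
          rw [this, map_neg, hg p, neg_zero]
        calc ⁅(p : L), ⁅g, v⁆⁆ = ⁅⁅(p : L), g⁆, v⁆ + ⁅g, ⁅(p : L), v⁆⁆ := by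
              rw [leibniz_lie]
          _ = φ q • v + ⁅g, φ p • v⁆ := by rw [hvp p]; exact congrArg (· + _) (hvp q)
          _ = φ p • ⁅g, v⁆ := by rw [hφq, zero_smul, zero_add, lie_smul]
      obtain ⟨c, hc⟩ := hbl ⁅g, v⁆ h1
      exact ⟨c, hc⟩
    obtain ⟨ca, ea⟩ := hmem a ha
    obtain ⟨cb, eb⟩ := hmem b hb
    have key : ⁅⁅a, b⁆, v⁆ = (0 : ℂ) • v := by
      rw [lie_lie, ea, eb, lie_smul, lie_smul, ea, eb, smul_smul, smul_smul, mul_comm,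
        sub_self, zero_smul]
    have habW : ⁅a, b⁆ ∈ W := ⟨0, key⟩
    show f (π ⁅a, b⁆) = 0
    rw [hπ _ habW]
    exact hcval _ habW 0 key
  · intro p
    have hpW : (p : L) ∈ W := ⟨φ p, hvp p⟩
    show f (π (p : L)) = φ p
    rw [hπ _ hpW]
    exact hcval _ hpW (φ p) (hvp p)
end

section
/- Let 𝔤 be the conformal Galilei algebra 𝔤^(ℓ) = 𝔰𝔩₂(ℂ) ⋉ 𝔭, where 𝔭 has basis p₀, …, p_{2ℓ} and 𝔰𝔩₂ = span{e,h,f} acts by [h,p_k] = 2(ℓ−k)p_k, [e,p_k] = k p_{k−1}, [f,p_k] = (2ℓ−k)p_{k+1}, and 𝔭 is abelian. For every two-dimensional subalgebra 𝔞 of 𝔰𝔩₂(ℂ), one has [𝔞, 𝔭] = 𝔭. Consequently, for any nonzero linear map φ : 𝔭 → ℂ, the Whittaker annihilator satisfies dim(𝔤^φ/𝔭) ≤ 1. -/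
lemma stmt9_core (N : ℕ) (hN : 1 ≤ N) (ψ : ℕ → ℂ) (a b c α β γ : ℂ)
    (hy : ¬(α = 0 ∧ β = 0 ∧ γ = 0))
    (e1 : 2*(b*α - a*β) = α) (e2 : a*γ - c*α = β) (e3 : 2*(c*β - b*γ) = γ)
    (hx : ∀ k : ℕ, k ≤ N →
      a*(k:ℂ)*ψ (k-1) + b*((N:ℂ)-2*(k:ℂ))*ψ k + c*((N:ℂ)-(k:ℂ))*ψ (k+1) = 0)
    (hyc : ∀ k : ℕ, k ≤ N →
      α*(k:ℂ)*ψ (k-1) + β*((N:ℂ)-2*(k:ℂ))*ψ k + γ*((N:ℂ)-(k:ℂ))*ψ (k+1) = 0) :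
    ∀ k ≤ N, ψ k = 0 := by
  have hNC : (N:ℂ) ≠ 0 := Nat.cast_ne_zero.mpr (by omega)
  have hnil : β^2 + α*γ = 0 := by
    linear_combination (-β)*e2 - (γ/2)*e1 - (α/2)*e3
  by_cases hγ : γ = 0
  · -- y = α e
    have hβ0 : β = 0 := by
      have h2 : β^2 = 0 := by rw [hγ] at hnil; linear_combination hnil
      exact pow_eq_zero_iff (by norm_num : (2:ℕ) ≠ 0) |>.mp h2
    have hα0 : α ≠ 0 := fun hh => hy ⟨hh, hβ0, hγ⟩
    have hb : 2*b = 1 :=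
      mul_right_cancel₀ hα0 (show (2*b)*α = 1*α by rw [hβ0] at e1; linear_combination e1)
    have hc : c = 0 := by
      have h2 : c*α = 0 := by rw [hβ0, hγ] at e2; linear_combination -e2
      rcases mul_eq_zero.mp h2 with h | h
      · exact h
      · exact absurd h hα0
    have hlt : ∀ j, j < N → ψ j = 0 := by
      intro j hj
      have hr := hyc (j+1) (Nat.succ_le_of_lt hj)
      rw [hβ0, hγ] at hr
      have hj1 : ((j:ℂ)+1) ≠ 0 := by
        have := Nat.cast_add_one_ne_zero (R := ℂ) j
        simpa using this
      have hr' : α * ((j:ℂ)+1) * ψ j = 0 := by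
        push_cast at hr
        simpa using hr
      rcases mul_eq_zero.mp hr' with h | h
      · rcases mul_eq_zero.mp h with h' | h'
        · exact absurd h' hα0
        · exact absurd h' hj1
      · exact h
    intro k hk
    rcases lt_or_eq_of_le hk with h | h
    · exact hlt k h
    · subst h
      have hr := hx k le_rfl
      rw [hc] at hr
      have hψ1 : ψ (k-1) = 0 := hlt (k-1) (by omega)
      rw [hψ1] at hr
      have hco : b * ((k:ℂ) - 2*(k:ℂ)) ≠ 0 := by
        apply mul_ne_zero
        · intro hb0; rw [hb0] at hb; norm_num at hb
        · intro hh
          have : (k:ℂ) = 0 := by linear_combination -hh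
          exact hNC this
      have : b * ((k:ℂ) - 2*(k:ℂ)) * ψ k = 0 := by linear_combination hr
      exact (mul_eq_zero.mp this).resolve_left hco
  · -- γ ≠ 0
    set t : ℂ := -β/γ with ht
    have hβ : β = -t*γ := by rw [ht, neg_div, neg_neg, div_mul_cancel₀ _ hγ]
    have hα : α = -t^2*γ := by
      apply mul_right_cancel₀ hγ
      have : β^2 = t^2*γ^2 := by rw [hβ]; ring
      linear_combination hnil - this
    have claim : ∀ k, k ≤ N → ψ k = t ^ k * ψ 0 := by
      intro k
      induction k using Nat.strong_induction_on with
      | _ k ih =>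
        intro hk
        match k with
        | 0 => simp
        | (j+1) =>
          have hjN : j < N := lt_of_lt_of_le (Nat.lt_succ_self j) hk
          have hNj : (N:ℂ) - (j:ℂ) ≠ 0 := by
            have : (j:ℂ) ≠ (N:ℂ) := by exact_mod_cast hjN.ne
            exact sub_ne_zero.mpr (fun hh => this hh.symm)
          have hrec := hyc j hjN.le
          have hcan : γ * ((N:ℂ) - (j:ℂ)) ≠ 0 := mul_ne_zero hγ hNj
          have hψj : ψ j = t^j * ψ 0 := ih j (Nat.lt_succ_self j) hjN.le
          match j, hrec, hψj, hcan with
          | 0, hrec, hψj, hcan =>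
            apply mul_left_cancel₀ hcan
            rw [hα, hβ] at hrec
            push_cast at hrec ⊢
            linear_combination hrec
          | (i+1), hrec, hψj, hcan =>
            have hψi : ψ i = t^i * ψ 0 := ih i (by omega) (by omega)
            apply mul_left_cancel₀ hcan
            rw [hα, hβ] at hrec
            have hsub : (i+1) - 1 = i := rfl
            rw [hsub, hψi, hψj] at hrec
            push_cast at hrec ⊢
            ring_nf
            ring_nf at hrec
            linear_combination hrec
    have hψ0 : ψ 0 = 0 := by
      by_contra hψ0
      have h0 := hx 0 (Nat.zero_le N)
      have hψ1 : ψ 1 = t * ψ 0 := by simpa using claim 1 hN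
      rw [hψ1] at h0
      have hb : b = -(c*t) := by
        apply mul_left_cancel₀ (mul_ne_zero hNC hψ0)
        push_cast at h0
        linear_combination h0
      have : γ = 0 := by
        rw [hβ, hb] at e3
        linear_combination -e3
      exact hγ this
    intro k hk
    rw [claim k hk, hψ0, mul_zero]

lemma stmt9_cross (a b c α β γ : ℂ) (h1 : b*α - a*β = 0) (h2 : a*γ - c*α = 0)
    (h3 : c*β - b*γ = 0) (hu : ¬(a = 0 ∧ b = 0 ∧ c = 0)) :
    ∃ s : ℂ, α = s*a ∧ β = s*b ∧ γ = s*c := by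
  by_cases ha : a = 0
  · by_cases hb : b = 0
    · have hc : c ≠ 0 := fun hc => hu ⟨ha, hb, hc⟩
      refine ⟨γ/c, ?_, ?_, ?_⟩ <;> field_simp
      · linear_combination -h2
      · linear_combination h3
    · refine ⟨β/b, ?_, ?_, ?_⟩ <;> field_simp
      · linear_combination h1
      · linear_combination -h3
  · refine ⟨α/a, ?_, ?_, ?_⟩ <;> field_simp
    · linear_combination -h1
    · linear_combination h2

lemma stmt9_coord {L : Type*} [AddCommGroup L] [Module ℂ L] (e h f : L)
    (hind3 : LinearIndependent ℂ ![e, h, f]) {a b c a' b' c' : ℂ}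
    (heq : a•e + b•h + c•f = a'•e + b'•h + c'•f) : a = a' ∧ b = b' ∧ c = c' := by
  have h0 := Fintype.linearIndependent_iff.mp hind3 ![a - a', b - b', c - c'] (by
    rw [Fin.sum_univ_three]
    simp only [Matrix.cons_val_zero, Matrix.cons_val_one, Matrix.head_cons,
      Matrix.cons_val_two, Matrix.tail_cons]
    have hexp : (a - a')•e + (b - b')•h + (c - c')•f
        = (a•e + b•h + c•f) - (a'•e + b'•h + c'•f) := by module
    rw [hexp, heq, sub_self])
  refine ⟨sub_eq_zero.mp ?_, sub_eq_zero.mp ?_, sub_eq_zero.mp ?_⟩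
  · simpa using h0 0
  · simpa using h0 1
  · simpa using h0 2

lemma stmt9_master {L : Type*} [LieRing L] [LieAlgebra ℂ L]
    (N : ℕ) (hN : 1 ≤ N) (e h f : L) (p : ℕ → L)
    (hhe : ⁅h, e⁆ = (2 : ℂ) • e) (hhf : ⁅h, f⁆ = (-2 : ℂ) • f) (hef : ⁅e, f⁆ = h)
    (hhp : ∀ k, ⁅h, p k⁆ = ((N : ℂ) - 2 * k) • p k)
    (hep : ∀ k, ⁅e, p k⁆ = (k : ℂ) • p (k - 1))
    (hfp : ∀ k, ⁅f, p k⁆ = ((N : ℂ) - k) • p (k + 1))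
    (htop : ∀ k, N < k → p k = 0)
    (hind3 : LinearIndependent ℂ ![e, h, f])
    (Φ : L →ₗ[ℂ] ℂ) (u v : L)
    (hu : u ∈ Submodule.span ℂ {e, h, f}) (hv : v ∈ Submodule.span ℂ {e, h, f})
    (huv : LinearIndependent ℂ ![u, v])
    (hΦu : ∀ k, Φ ⁅u, p k⁆ = 0) (hΦv : ∀ k, Φ ⁅v, p k⁆ = 0) :
    ∀ k, Φ (p k) = 0 := by
  classical
  -- basic bracket relations
  have heh : ⁅e, h⁆ = (-2:ℂ) • e := by rw [← lie_skew, hhe]; module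
  have hfh : ⁅f, h⁆ = (2:ℂ) • f := by rw [← lie_skew, hhf]; module
  have hfe : ⁅f, e⁆ = -h := by rw [← lie_skew, hef]
  -- bracket formula on sl2
  have brk : ∀ a b c α β γ : ℂ, ⁅a•e + b•h + c•f, α•e + β•h + γ•f⁆
      = (2*(b*α - a*β))•e + (a*γ - c*α)•h + (2*(c*β - b*γ))•f := by
    intro a b c α β γ
    simp only [lie_add, add_lie, lie_smul, smul_lie, lie_self, hhe, hhf, hef, heh, hfh, hfe,
      smul_zero, zero_add, add_zero, smul_neg, smul_smul]
    module
  -- bracket with p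
  have brkp : ∀ (a b c : ℂ) (k : ℕ), ⁅a•e + b•h + c•f, p k⁆
      = (a*(k:ℂ))•p (k-1) + (b*((N:ℂ)-2*(k:ℂ)))•p k + (c*((N:ℂ)-(k:ℂ)))•p (k+1) := by
    intro a b c k
    simp only [add_lie, smul_lie, hep k, hhp k, hfp k, smul_smul]
  -- coordinates
  have memtriple : ∀ z : L, z ∈ Submodule.span ℂ ({e, h, f} : Set L) →
      ∃ a b c : ℂ, z = a•e + b•h + c•f := by
    intro z hz
    rw [show ({e, h, f} : Set L) = insert e (insert h {f}) from rfl,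
      Submodule.mem_span_insert] at hz
    obtain ⟨a, z1, hz1, rfl⟩ := hz
    rw [Submodule.mem_span_insert] at hz1
    obtain ⟨b, z2, hz2, rfl⟩ := hz1
    rw [Submodule.mem_span_singleton] at hz2
    obtain ⟨c, rfl⟩ := hz2
    exact ⟨a, b, c, by module⟩
  obtain ⟨a, b, c, hu'⟩ := memtriple u hu
  obtain ⟨α, β, γ, hv'⟩ := memtriple v hv
  set ψ : ℕ → ℂ := fun k => Φ (p k) with hψdef
  -- annihilation in coordinates
  have acond : ∀ (x1 x2 x3 : ℂ) (z : L), z = x1•e + x2•h + x3•f → (∀ k, Φ ⁅z, p k⁆ = 0) →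
      ∀ k : ℕ, k ≤ N →
        x1*(k:ℂ)*ψ (k-1) + x2*((N:ℂ)-2*(k:ℂ))*ψ k + x3*((N:ℂ)-(k:ℂ))*ψ (k+1) = 0 := by
    intro x1 x2 x3 z hz hzΦ k _
    have hzk := hzΦ k
    rw [hz, brkp, map_add, map_add, map_smul, map_smul, map_smul, smul_eq_mul, smul_eq_mul,
      smul_eq_mul] at hzk
    linear_combination hzk
  -- w = [u, v]
  have hw' : ⁅u, v⁆ = (2*(b*α - a*β))•e + (a*γ - c*α)•h + (2*(c*β - b*γ))•f := by
    rw [hu', hv', brk]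
  -- Φ kills brackets of w with p
  have hΦw : ∀ k, Φ ⁅⁅u, v⁆, p k⁆ = 0 := by
    intro k
    rw [lie_lie, map_sub]
    have h1 : ⁅u, ⁅v, p k⁆⁆ = (α*(k:ℂ))•⁅u, p (k-1)⁆ + (β*((N:ℂ)-2*(k:ℂ)))•⁅u, p k⁆
        + (γ*((N:ℂ)-(k:ℂ)))•⁅u, p (k+1)⁆ := by
      conv_lhs => rw [show ⁅v, p k⁆ = (α*(k:ℂ))•p (k-1) + (β*((N:ℂ)-2*(k:ℂ)))•p k
        + (γ*((N:ℂ)-(k:ℂ)))•p (k+1) from by rw [hv', brkp]]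
      simp [lie_add, lie_smul]
    have h2 : ⁅v, ⁅u, p k⁆⁆ = (a*(k:ℂ))•⁅v, p (k-1)⁆ + (b*((N:ℂ)-2*(k:ℂ)))•⁅v, p k⁆
        + (c*((N:ℂ)-(k:ℂ)))•⁅v, p (k+1)⁆ := by
      conv_lhs => rw [show ⁅u, p k⁆ = (a*(k:ℂ))•p (k-1) + (b*((N:ℂ)-2*(k:ℂ)))•p k
        + (c*((N:ℂ)-(k:ℂ)))•p (k+1) from by rw [hu', brkp]]
      simp [lie_add, lie_smul]
    rw [h1, h2]
    simp [map_add, map_smul, hΦu, hΦv]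
  -- independence facts
  have hufst : (![u, v] : Fin 2 → L) 0 = u := rfl
  have huv2 := linearIndependent_fin2.mp huv
  have hvne : v ≠ 0 := huv2.1
  have hnprop : ∀ s : ℂ, s • u ≠ v := by
    intro s hs
    by_cases hs0 : s = 0
    · rw [hs0, zero_smul] at hs; exact hvne hs.symm
    · apply huv2.2 s⁻¹
      simp only [Matrix.cons_val_one, Matrix.head_cons, Matrix.cons_val_zero]
      rw [← hs, smul_smul, inv_mul_cancel₀ hs0, one_smul]
  have hune : ¬(a = 0 ∧ b = 0 ∧ c = 0) := by
    rintro ⟨ha, hb, hc⟩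
    apply huv.ne_zero 0
    rw [hufst, hu', ha, hb, hc]
    simp
  have hwcoordne : ¬(2*(b*α - a*β) = 0 ∧ a*γ - c*α = 0 ∧ 2*(c*β - b*γ) = 0) := by
    rintro ⟨hA, hB, hC⟩
    obtain ⟨s, h1, h2, h3⟩ := stmt9_cross a b c α β γ
      (by linear_combination hA/2) hB (by linear_combination hC/2) hune
    exact hnprop s (by rw [hu', hv', h1, h2, h3]; module)
  have hwne : ⁅u, v⁆ ≠ 0 := by
    intro h0
    apply hwcoordne
    have := stmt9_coord e h f hind3 (show (2*(b*α - a*β))•e + (a*γ - c*α)•h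
      + (2*(c*β - b*γ))•f = (0:ℂ)•e + (0:ℂ)•h + (0:ℂ)•f by
        rw [← hw', h0]; simp)
    refine ⟨this.1, this.2.1, this.2.2⟩
  -- final goal reduction
  suffices hS : ∀ k ≤ N, ψ k = 0 by
    intro k
    rcases le_or_gt k N with hk | hk
    · exact hS k hk
    · rw [htop k hk, map_zero]
  by_cases hsp : ⁅u, v⁆ ∈ Submodule.span ℂ ({u, v} : Set L)
  · -- [u,v] = l u + m v
    obtain ⟨l, m, hlm⟩ := Submodule.mem_span_pair.mp hsp
    obtain ⟨s, t, hst⟩ : ∃ s t : ℂ, s*m - t*l = 1 := by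
      by_cases hm : m = 0
      · have hl : l ≠ 0 := by
          intro hl0
          rw [hl0, hm] at hlm
          simp at hlm
          exact hwne hlm.symm
        exact ⟨0, -l⁻¹, by field_simp; ring⟩
      · exact ⟨m⁻¹, 0, by field_simp; ring⟩
    have hxw : ⁅s•u + t•v, ⁅u, v⁆⁆ = ⁅u, v⁆ := by
      have h1 : ⁅u, ⁅u, v⁆⁆ = m • ⁅u, v⁆ := by
        conv_lhs => rw [← hlm]
        simp [lie_add, lie_smul, lie_self]
      have h2 : ⁅v, ⁅u, v⁆⁆ = -(l • ⁅u, v⁆) := by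
        conv_lhs => rw [← hlm]
        have hvu : ⁅v, u⁆ = -⁅u, v⁆ := neg_eq_iff_eq_neg.mp (lie_skew u v)
        rw [lie_add, lie_smul, lie_smul, lie_self, smul_zero, add_zero, hvu, smul_neg]
      rw [add_lie, smul_lie, smul_lie, h1, h2]
      have : s • (m • ⁅u,v⁆) + t • -(l • ⁅u,v⁆) = (s*m - t*l) • ⁅u,v⁆ := by module
      rw [this, hst, one_smul]
    -- coordinates of x
    have hx' : s•u + t•v = (s*a + t*α)•e + (s*b + t*β)•h + (s*c + t*γ)•f := by
      rw [hu', hv']; module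
    -- coordinate equations from hxw
    have hceq := stmt9_coord e h f hind3 (show
        (2*((s*b + t*β)*(2*(b*α - a*β)) - (s*a + t*α)*(a*γ - c*α)))•e
        + ((s*a + t*α)*(2*(c*β - b*γ)) - (s*c + t*γ)*(2*(b*α - a*β)))•h
        + (2*((s*c + t*γ)*(a*γ - c*α) - (s*b + t*β)*(2*(c*β - b*γ))))•f
        = (2*(b*α - a*β))•e + (a*γ - c*α)•h + (2*(c*β - b*γ))•f by
      rw [← brk, ← hx', ← hw', hxw, hw'])
    -- annihilation of x
    have hΦx : ∀ k, Φ ⁅s•u + t•v, p k⁆ = 0 := by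
      intro k
      rw [add_lie, smul_lie, smul_lie, map_add, map_smul, map_smul, hΦu, hΦv]
      simp
    have hcx := acond (s*a + t*α) (s*b + t*β) (s*c + t*γ) _ hx' hΦx
    have hcw := acond (2*(b*α - a*β)) (a*γ - c*α) (2*(c*β - b*γ)) _ hw' hΦw
    exact stmt9_core N hN ψ (s*a + t*α) (s*b + t*β) (s*c + t*γ)
      (2*(b*α - a*β)) (a*γ - c*α) (2*(c*β - b*γ)) hwcoordne
      hceq.1 hceq.2.1 hceq.2.2 hcx hcw
  · -- dim 3 case
    set S : Submodule ℂ L := Submodule.span ℂ ({e, h, f} : Set L) with hSdef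
    set VS : Submodule ℂ L := S ⊓ ⨅ k : ℕ, LinearMap.ker (Φ ∘ₗ ((LieAlgebra.ad ℂ L) (p k))) with hVSdef
    have hmemVS : ∀ z : L, z ∈ VS ↔ z ∈ S ∧ ∀ k, Φ ⁅z, p k⁆ = 0 := by
      intro z
      rw [hVSdef, Submodule.mem_inf]
      apply and_congr Iff.rfl
      rw [Submodule.mem_iInf]
      apply forall_congr'
      intro k
      rw [LinearMap.mem_ker, LinearMap.comp_apply, LieAlgebra.ad_apply]
      constructor
      · intro hh
        have : ⁅z, p k⁆ = -⁅p k, z⁆ := by rw [lie_skew]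
        rw [this, map_neg, hh, neg_zero]
      · intro hh
        have : ⁅p k, z⁆ = -⁅z, p k⁆ := by rw [lie_skew]
        rw [this, map_neg, hh, neg_zero]
    have huVS : u ∈ VS := (hmemVS u).mpr ⟨hu, hΦu⟩
    have hvVS : v ∈ VS := (hmemVS v).mpr ⟨hv, hΦv⟩
    have hwS : ⁅u, v⁆ ∈ S := by
      rw [hw']
      refine Submodule.add_mem _ (Submodule.add_mem _ ?_ ?_) ?_ <;>
        exact Submodule.smul_mem _ _ (Submodule.subset_span (by simp))
    have hwVS : ⁅u, v⁆ ∈ VS := (hmemVS _).mpr ⟨hwS, hΦw⟩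
    have hsnoc : ![u, v, ⁅u, v⁆] = Fin.snoc ![u, v] ⁅u, v⁆ := by
      funext i; fin_cases i <;> simp [Fin.snoc] <;> rfl
    have hrangeuv : Set.range ![u, v] = ({u, v} : Set L) := by
      simp [Matrix.range_cons, Matrix.range_empty, Set.pair_comm]
    have hind3' : LinearIndependent ℂ ![u, v, ⁅u, v⁆] := by
      rw [hsnoc, linearIndependent_fin_snoc]
      exact ⟨huv, by rwa [hrangeuv]⟩
    have hRle : Submodule.span ℂ (Set.range ![u, v, ⁅u, v⁆]) ≤ VS := by
      rw [Submodule.span_le]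
      rintro z ⟨i, rfl⟩
      fin_cases i
      · exact huVS
      · exact hvVS
      · exact hwVS
    have hVSle : VS ≤ S := inf_le_left
    haveI : FiniteDimensional ℂ S := FiniteDimensional.span_of_finite ℂ (Set.toFinite _)
    have hrangeehf : Set.range ![e, h, f] = ({e, h, f} : Set L) := by
      simp [Matrix.range_cons, Matrix.range_empty]
      ext z; constructor
      · rintro (rfl | rfl | rfl) <;> simp
      · rintro (rfl | rfl | rfl) <;> simp
    have hrS : Module.finrank ℂ S = 3 := by
      rw [hSdef, ← hrangeehf, finrank_span_eq_card hind3]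
      simp
    have hrR : Module.finrank ℂ (Submodule.span ℂ (Set.range ![u, v, ⁅u, v⁆])) = 3 := by
      rw [finrank_span_eq_card hind3']
      simp
    have hReq : Submodule.span ℂ (Set.range ![u, v, ⁅u, v⁆]) = S :=
      Submodule.eq_of_le_of_finrank_le (le_trans hRle hVSle) (by rw [hrS, hrR])
    have hSVS : S ≤ VS := by rw [← hReq]; exact hRle
    have heVS : e ∈ VS := hSVS (Submodule.subset_span (by simp))
    have hhVS : h ∈ VS := hSVS (Submodule.subset_span (by simp))
    have hΦe : ∀ k, Φ ⁅e, p k⁆ = 0 := ((hmemVS e).mp heVS).2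
    have hΦh : ∀ k, Φ ⁅h, p k⁆ = 0 := ((hmemVS h).mp hhVS).2
    have hcx : ∀ k : ℕ, k ≤ N →
        0*(k:ℂ)*ψ (k-1) + (1/2)*((N:ℂ)-2*(k:ℂ))*ψ k + 0*((N:ℂ)-(k:ℂ))*ψ (k+1) = 0 := by
      intro k _
      have hh := hΦh k
      rw [hhp k, map_smul, smul_eq_mul] at hh
      linear_combination hh/2
    have hcy : ∀ k : ℕ, k ≤ N →
        1*(k:ℂ)*ψ (k-1) + 0*((N:ℂ)-2*(k:ℂ))*ψ k + 0*((N:ℂ)-(k:ℂ))*ψ (k+1) = 0 := by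
      intro k _
      have hh := hΦe k
      rw [hep k, map_smul, smul_eq_mul] at hh
      linear_combination hh
    exact stmt9_core N hN ψ 0 (1/2) 0 1 0 0 (by norm_num)
      (by norm_num) (by norm_num) (by norm_num) hcx hcy
/-- The conformal Galilei algebra `𝔤^(ℓ) = 𝔰𝔩₂ ⋉ 𝔭`, with `N = 2ℓ` and abelian ideal
`𝔭 = span{p₀,…,p_N}`.  (1) For every two-dimensional subalgebra `𝔞` of `𝔰𝔩₂` one has
`[𝔞, 𝔭] = 𝔭`.  (2) For every linear functional `Φ` that is nonzero on `𝔭`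
(representing a nonzero `φ : 𝔭 → ℂ`), the Whittaker annihilator
`𝔤^φ = {g | Φ(⁅g, p_k⁆) = 0 ∀k}` satisfies `dim 𝔤^φ/𝔭 ≤ 1`, i.e. `𝔤^φ ⊆ ℂx + 𝔭`
for some `x`. -/
theorem stmt9 {L : Type*} [LieRing L] [LieAlgebra ℂ L]
    (N : ℕ) (hN : 1 ≤ N) (e h f : L) (p : ℕ → L)
    (hhe : ⁅h, e⁆ = (2 : ℂ) • e) (hhf : ⁅h, f⁆ = (-2 : ℂ) • f) (hef : ⁅e, f⁆ = h)
    (hhp : ∀ k, ⁅h, p k⁆ = ((N : ℂ) - 2 * k) • p k)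
    (hep : ∀ k, ⁅e, p k⁆ = (k : ℂ) • p (k - 1))
    (hfp : ∀ k, ⁅f, p k⁆ = ((N : ℂ) - k) • p (k + 1))
    (hpp : ∀ k l, ⁅p k, p l⁆ = 0)
    (htop : ∀ k, N < k → p k = 0)
    (hind : LinearIndependent ℂ
      (Sum.elim ![e, h, f] (fun k : Fin (N + 1) => p (k : ℕ))))
    (hspan : Submodule.span ℂ ({e, h, f} ∪ Set.range p) = ⊤) :
    (∀ 𝔞 : LieSubalgebra ℂ L, (𝔞 : Set L) ⊆ ↑(Submodule.span ℂ {e, h, f}) →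
      Module.finrank ℂ 𝔞 = 2 →
      Submodule.span ℂ {w : L | ∃ a ∈ 𝔞, ∃ k, w = ⁅a, p k⁆} =
        Submodule.span ℂ (Set.range p)) ∧
    (∀ Φ : L →ₗ[ℂ] ℂ, (∃ k, Φ (p k) ≠ 0) →
      ∃ x : L, ∀ g : L, (∀ k, Φ ⁅g, p k⁆ = 0) →
        ∃ c : ℂ, g - c • x ∈ Submodule.span ℂ (Set.range p)) := by
  classical
  have hind3 : LinearIndependent ℂ ![e, h, f] := by
    have h1 := hind.comp Sum.inl Sum.inl_injective
    have h2 : (Sum.elim ![e, h, f] (fun k : Fin (N + 1) => p (k : ℕ))) ∘ Sum.inl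
        = ![e, h, f] := by funext i; simp
    rwa [h2] at h1
  constructor
  · -- part 1
    intro 𝔞 h𝔞S h𝔞2
    have h𝔞2' : Module.finrank ℂ 𝔞.toSubmodule = 2 := h𝔞2
    haveI : FiniteDimensional ℂ 𝔞.toSubmodule :=
      FiniteDimensional.of_finrank_eq_succ h𝔞2'
    let B := Module.finBasisOfFinrankEq ℂ 𝔞.toSubmodule h𝔞2'
    have hBind : LinearIndependent ℂ (fun i : Fin 2 => ((B i : 𝔞.toSubmodule) : L)) :=
      B.linearIndependent.map' 𝔞.toSubmodule.subtype (Submodule.ker_subtype _)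
    set u : L := ((B 0 : 𝔞.toSubmodule) : L) with hudef
    set v : L := ((B 1 : 𝔞.toSubmodule) : L) with hvdef
    have huvind : LinearIndependent ℂ ![u, v] := by
      have : ![u, v] = fun i : Fin 2 => ((B i : 𝔞.toSubmodule) : L) := by
        funext i; fin_cases i <;> rfl
      rwa [this]
    have hu𝔞 : u ∈ 𝔞 := (B 0).2
    have hv𝔞 : v ∈ 𝔞 := (B 1).2
    have huS : u ∈ Submodule.span ℂ ({e, h, f} : Set L) := h𝔞S hu𝔞
    have hvS : v ∈ Submodule.span ℂ ({e, h, f} : Set L) := h𝔞S hv𝔞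
    apply le_antisymm
    · rw [Submodule.span_le]
      rintro w ⟨z, hz𝔞, k, rfl⟩
      have hzS : z ∈ Submodule.span ℂ ({e, h, f} : Set L) := h𝔞S hz𝔞
      have : ∀ z ∈ Submodule.span ℂ ({e, h, f} : Set L),
          ⁅z, p k⁆ ∈ Submodule.span ℂ (Set.range p) := by
        intro z hz
        induction hz using Submodule.span_induction with
        | mem x hx =>
          rcases hx with rfl | rfl | rfl
          · rw [hep]; exact Submodule.smul_mem _ _ (Submodule.subset_span ⟨_, rfl⟩)
          · rw [hhp]; exact Submodule.smul_mem _ _ (Submodule.subset_span ⟨_, rfl⟩)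
          · rw [hfp]; exact Submodule.smul_mem _ _ (Submodule.subset_span ⟨_, rfl⟩)
        | zero => rw [zero_lie]; exact Submodule.zero_mem _
        | add x y _ _ h1 h2 => rw [add_lie]; exact Submodule.add_mem _ h1 h2
        | smul r x _ h1 => rw [smul_lie]; exact Submodule.smul_mem _ _ h1
      exact this z hzS
    · by_contra hnle
      obtain ⟨z, hzP, hznT⟩ := SetLike.not_le_iff_exists.mp hnle
      set T := Submodule.span ℂ {w : L | ∃ a ∈ 𝔞, ∃ k, w = ⁅a, p k⁆} with hTdef
      have hmk : (Submodule.Quotient.mk z : L ⧸ T) ≠ 0 := by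
        simpa [Submodule.Quotient.mk_eq_zero] using hznT
      obtain ⟨g, hg⟩ : ∃ g : Module.Dual ℂ (L ⧸ T), g (Submodule.Quotient.mk z) ≠ 0 := by
        by_contra hcon; push_neg at hcon
        exact hmk ((Module.forall_dual_apply_eq_zero_iff ℂ _).mp hcon)
      set Φ : L →ₗ[ℂ] ℂ := g ∘ₗ T.mkQ with hΦdef
      have hΦT : ∀ w ∈ T, Φ w = 0 := by
        intro w hw
        have : T.mkQ w = 0 := by
          rw [Submodule.mkQ_apply]
          exact (Submodule.Quotient.mk_eq_zero T).mpr hw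
        rw [hΦdef, LinearMap.comp_apply, this, map_zero]
      have hΦu : ∀ k, Φ ⁅u, p k⁆ = 0 := fun k =>
        hΦT _ (Submodule.subset_span ⟨u, hu𝔞, k, rfl⟩)
      have hΦv : ∀ k, Φ ⁅v, p k⁆ = 0 := fun k =>
        hΦT _ (Submodule.subset_span ⟨v, hv𝔞, k, rfl⟩)
      have hall := stmt9_master N hN e h f p hhe hhf hef hhp hep hfp htop hind3
        Φ u v huS hvS huvind hΦu hΦv
      have hΦP : ∀ w ∈ Submodule.span ℂ (Set.range p), Φ w = 0 := by
        intro w hw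
        induction hw using Submodule.span_induction with
        | mem x hx => obtain ⟨k, rfl⟩ := hx; exact hall k
        | zero => exact map_zero Φ
        | add x y _ _ h1 h2 => rw [map_add, h1, h2, add_zero]
        | smul r x _ h1 => rw [map_smul, h1, smul_zero]
      have : Φ z = g (Submodule.Quotient.mk z) := rfl
      exact hg (this ▸ hΦP z hzP)
  · -- part 2
    intro Φ hΦne
    have hdecomp : ∀ g : L, ∃ s ∈ Submodule.span ℂ ({e, h, f} : Set L),
        ∃ q ∈ Submodule.span ℂ (Set.range p), s + q = g := by
      intro g
      have hg : g ∈ Submodule.span ℂ (({e, h, f} : Set L) ∪ Set.range p) := by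
        rw [hspan]; trivial
      rw [Submodule.span_union] at hg
      exact Submodule.mem_sup.mp hg
    have hqbr : ∀ q ∈ Submodule.span ℂ (Set.range p), ∀ k, ⁅q, p k⁆ = 0 := by
      intro q hq k
      induction hq using Submodule.span_induction with
      | mem x hx => obtain ⟨j, rfl⟩ := hx; exact hpp j k
      | zero => rw [zero_lie]
      | add x y _ _ h1 h2 => rw [add_lie, h1, h2, add_zero]
      | smul r x _ h1 => rw [smul_lie, h1, smul_zero]
    have hsplit : ∀ g : L, (∀ k, Φ ⁅g, p k⁆ = 0) →
        ∃ s ∈ Submodule.span ℂ ({e, h, f} : Set L),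
        ∃ q ∈ Submodule.span ℂ (Set.range p), s + q = g ∧ (∀ k, Φ ⁅s, p k⁆ = 0) := by
      intro g hg
      obtain ⟨s, hsS, q, hqP, hsq⟩ := hdecomp g
      refine ⟨s, hsS, q, hqP, hsq, ?_⟩
      intro k
      have h1 : ⁅g, p k⁆ = ⁅s, p k⁆ + ⁅q, p k⁆ := by rw [← hsq, add_lie]
      have h2 := hg k
      rw [h1, hqbr q hqP k, add_zero] at h2
      exact h2
    by_cases hex : ∃ x, x ∈ Submodule.span ℂ ({e, h, f} : Set L) ∧
        (∀ k, Φ ⁅x, p k⁆ = 0) ∧ x ≠ 0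
    · obtain ⟨x, hxS, hxA, hx0⟩ := hex
      refine ⟨x, ?_⟩
      intro g hg
      obtain ⟨s, hsS, q, hqP, hsq, hsA⟩ := hsplit g hg
      have hc : ∃ c : ℂ, s = c • x := by
        by_contra hnc
        push_neg at hnc
        have hs0 : s ≠ 0 := fun h0 => hnc 0 (by rw [h0, zero_smul])
        have hind2 : LinearIndependent ℂ ![x, s] := by
          rw [linearIndependent_fin2]
          refine ⟨by simpa using hs0, ?_⟩
          intro r hr
          simp only [Matrix.cons_val_one, Matrix.head_cons, Matrix.cons_val_zero] at hr
          by_cases hr0 : r = 0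
          · rw [hr0, zero_smul] at hr; exact hx0 hr.symm
          · exact hnc r⁻¹ (by rw [← hr, smul_smul, inv_mul_cancel₀ hr0, one_smul])
        have hall := stmt9_master N hN e h f p hhe hhf hef hhp hep hfp htop hind3
          Φ x s hxS hsS hind2 hxA hsA
        obtain ⟨k0, hk0⟩ := hΦne
        exact hk0 (hall k0)
      obtain ⟨cc, hcc⟩ := hc
      refine ⟨cc, ?_⟩
      rw [← hsq, hcc, add_sub_cancel_left]
      exact hqP
    · push_neg at hex
      refine ⟨0, ?_⟩
      intro g hg
      obtain ⟨s, hsS, q, hqP, hsq, hsA⟩ := hsplit g hg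
      have hs0 : s = 0 := hex s hsS hsA
      refine ⟨0, ?_⟩
      rw [← hsq, hs0, zero_add, zero_smul, sub_zero]
      exact hqP
end

section
/- Let 𝔰𝔠𝔥_n be the n-th Schrödinger algebra, 𝔰𝔠𝔥_n = 𝔰𝔩₂(ℂ) ⋉ 𝔥_n, where 𝔥_n is the Heisenberg algebra with basis x_i, y_i (1 ≤ i ≤ n), z, and the action is [h,x_i] = x_i, [e,x_i] = 0, [f,x_i] = y_i, [h,y_i] = −y_i, [e,y_i] = x_i, [f,y_i] = 0, [x_i,y_j] = δ_{ij}z, z central. For any two-dimensional subalgebra 𝔞 of 𝔰𝔩₂(ℂ), one has 𝔥_n = [𝔞, 𝔥_n] ⊕ ℂz. Consequently, for any nonzero Lie algebra homomorphism φ : 𝔥_n → ℂ (necessarily φ(z) = 0), the Whittaker annihilator satisfies dim(𝔰𝔠𝔥_n^φ / 𝔥_n) ≤ 1. -/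
lemma mem_span_triple3 {M : Type*} [AddCommGroup M] [Module ℂ M] {a b c v : M}
    (hv : v ∈ Submodule.span ℂ ({a, b, c} : Set M)) :
    ∃ p q r : ℂ, v = p • a + q • b + r • c := by
  rw [show ({a, b, c} : Set M) = insert a {b, c} from rfl,
    Submodule.mem_span_insert] at hv
  obtain ⟨p, w, hw, rfl⟩ := hv
  rw [Submodule.mem_span_pair] at hw
  obtain ⟨q, r, rfl⟩ := hw
  exact ⟨p, q, r, by module⟩

/-- The `n`-th Schrödinger algebra `𝔰𝔠𝔥_n = 𝔰𝔩₂ ⋉ 𝔥_n`.  (1) For every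
two-dimensional subalgebra `𝔞` of `𝔰𝔩₂` one has `𝔥_n = [𝔞, 𝔥_n] ⊕ ℂz`.
(2) For every nonzero Lie algebra homomorphism `φ : 𝔥_n → ℂ` (represented by a
functional `Φ` with `Φ z = 0`, nonzero on `𝔥_n`), the Whittaker annihilator satisfies
`dim 𝔰𝔠𝔥_n^φ/𝔥_n ≤ 1`, i.e. `𝔰𝔠𝔥_n^φ ⊆ ℂu + 𝔥_n` for some `u`. -/
theorem stmt10 {L : Type*} [LieRing L] [LieAlgebra ℂ L]
    (n : ℕ) (hn : 1 ≤ n) (h e f z : L) (x y : Fin n → L)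
    (hhe : ⁅h, e⁆ = (2 : ℂ) • e) (hhf : ⁅h, f⁆ = (-2 : ℂ) • f) (hef : ⁅e, f⁆ = h)
    (hhx : ∀ i, ⁅h, x i⁆ = x i) (hex : ∀ i, ⁅e, x i⁆ = 0) (hfx : ∀ i, ⁅f, x i⁆ = y i)
    (hhy : ∀ i, ⁅h, y i⁆ = -y i) (hey : ∀ i, ⁅e, y i⁆ = x i) (hfy : ∀ i, ⁅f, y i⁆ = 0)
    (hxx : ∀ i j, ⁅x i, x j⁆ = 0) (hyy : ∀ i j, ⁅y i, y j⁆ = 0)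
    (hxy : ∀ i j, ⁅x i, y j⁆ = if i = j then z else 0)
    (hz : ∀ g : L, ⁅z, g⁆ = 0)
    (hind : LinearIndependent ℂ
      (Sum.elim ![h, e, f, z] (Sum.elim x y)))
    (hspan : Submodule.span ℂ ({h, e, f, z} ∪ Set.range x ∪ Set.range y) = ⊤)
    (H : Submodule ℂ L)
    (hH : H = Submodule.span ℂ ({z} ∪ Set.range x ∪ Set.range y)) :
    (∀ 𝔞 : LieSubalgebra ℂ L, (𝔞 : Set L) ⊆ ↑(Submodule.span ℂ {h, e, f}) →
      Module.finrank ℂ 𝔞 = 2 →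
      Submodule.span ℂ {w : L | ∃ a ∈ 𝔞, ∃ v ∈ H, w = ⁅a, v⁆} ⊔
          Submodule.span ℂ {z} = H ∧
        Submodule.span ℂ {w : L | ∃ a ∈ 𝔞, ∃ v ∈ H, w = ⁅a, v⁆} ⊓
          Submodule.span ℂ {z} = ⊥) ∧
    (∀ Φ : L →ₗ[ℂ] ℂ, Φ z = 0 → (∃ v ∈ H, Φ v ≠ 0) →
      ∃ u : L, ∀ g : L, (∀ v ∈ H, Φ ⁅g, v⁆ = 0) → ∃ c : ℂ, g - c • u ∈ H) := by
  have hgz : ∀ g : L, ⁅g, z⁆ = 0 := fun g => by rw [← lie_skew, hz, neg_zero]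
  set S : Submodule ℂ L := Submodule.span ℂ ({z} : Set L) with hS
  set V : Submodule ℂ L := Submodule.span ℂ (Set.range x ∪ Set.range y) with hV
  have hzmem : z ∈ H := by rw [hH]; exact Submodule.subset_span (Or.inl (Or.inl rfl))
  have hxmem : ∀ i, x i ∈ H := fun i => by
    rw [hH]; exact Submodule.subset_span (Or.inl (Or.inr ⟨i, rfl⟩))
  have hymem : ∀ i, y i ∈ H := fun i => by
    rw [hH]; exact Submodule.subset_span (Or.inr ⟨i, rfl⟩)
  -- brackets of two elements of H lie in span {z}
  have hbrx : ∀ i, ∀ w ∈ H, ⁅x i, w⁆ ∈ S := by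
    intro i w hw
    rw [hH] at hw
    induction hw using Submodule.span_induction with
    | mem v hv =>
      rcases hv with (rfl | ⟨j, rfl⟩) | ⟨j, rfl⟩
      · simp [hgz]
      · simp [hxx]
      · rw [hxy]
        split
        · exact Submodule.subset_span rfl
        · simp
    | zero => simp
    | add v w _ _ hv hw => rw [lie_add]; exact add_mem hv hw
    | smul c v _ hv => rw [lie_smul]; exact Submodule.smul_mem _ _ hv
  have hbry : ∀ i, ∀ w ∈ H, ⁅y i, w⁆ ∈ S := by
    intro i w hw
    rw [hH] at hw
    induction hw using Submodule.span_induction with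
    | mem v hv =>
      rcases hv with (rfl | ⟨j, rfl⟩) | ⟨j, rfl⟩
      · simp [hgz]
      · rw [← lie_skew, hxy]
        split
        · exact neg_mem (Submodule.subset_span rfl)
        · simp
      · simp [hyy]
    | zero => simp
    | add v w _ _ hv hw => rw [lie_add]; exact add_mem hv hw
    | smul c v _ hv => rw [lie_smul]; exact Submodule.smul_mem _ _ hv
  have hbr : ∀ v ∈ H, ∀ w ∈ H, ⁅v, w⁆ ∈ S := by
    intro v hv
    rw [hH] at hv
    induction hv using Submodule.span_induction with
    | mem v hv =>
      rcases hv with (rfl | ⟨j, rfl⟩) | ⟨j, rfl⟩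
      · intro w _; simp [hz]
      · exact hbrx j
      · exact hbry j
    | zero => intro w _; simp
    | add v w _ _ hv hw => intro u hu; rw [add_lie]; exact add_mem (hv u hu) (hw u hu)
    | smul c v _ hv => intro u hu; rw [smul_lie]; exact Submodule.smul_mem _ _ (hv u hu)
  -- sl2 action on generators
  have hax : ∀ (α β γ : ℂ) (i), ⁅α • h + β • e + γ • f, x i⁆ = α • x i + γ • y i := by
    intro α β γ i
    rw [add_lie, add_lie, smul_lie, smul_lie, smul_lie, hhx, hex, hfx]
    module
  have hay : ∀ (α β γ : ℂ) (i), ⁅α • h + β • e + γ • f, y i⁆ = β • x i - α • y i := by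
    intro α β γ i
    rw [add_lie, add_lie, smul_lie, smul_lie, smul_lie, hhy, hey, hfy]
    module
  -- sl2 maps H into V
  have hsl2H : ∀ s ∈ Submodule.span ℂ ({h, e, f} : Set L), ∀ v ∈ H, ⁅s, v⁆ ∈ V := by
    intro s hs v hv
    obtain ⟨α, β, γ, rfl⟩ := mem_span_triple3 hs
    rw [hH] at hv
    induction hv using Submodule.span_induction with
    | mem w hw =>
      rcases hw with (rfl | ⟨j, rfl⟩) | ⟨j, rfl⟩
      · simp [hgz]
      · rw [hax]
        exact add_mem (Submodule.smul_mem _ _ (Submodule.subset_span (Or.inl ⟨j, rfl⟩)))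
          (Submodule.smul_mem _ _ (Submodule.subset_span (Or.inr ⟨j, rfl⟩)))
      · rw [hay]
        exact sub_mem (Submodule.smul_mem _ _ (Submodule.subset_span (Or.inl ⟨j, rfl⟩)))
          (Submodule.smul_mem _ _ (Submodule.subset_span (Or.inr ⟨j, rfl⟩)))
    | zero => simp
    | add v w _ _ hv hw => rw [lie_add]; exact add_mem hv hw
    | smul c v _ hv => rw [lie_smul]; exact Submodule.smul_mem _ _ hv
  -- only the z coefficient survives in S ∩ V
  have hcz : ∀ c : ℂ, c • z ∈ V → c = 0 := by
    intro c hc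
    rw [hV, ← Set.Sum.elim_range, Submodule.mem_span_range_iff_exists_fun] at hc
    obtain ⟨d, hd⟩ := hc
    have := Fintype.linearIndependent_iff.mp hind
      (Sum.elim ![0, 0, 0, c] (fun j => -(d j))) ?_ (Sum.inl 3)
    · simpa using this
    · have h4 : (∑ i : Fin 4, (![0, 0, 0, c] i : ℂ) • ![h, e, f, z] i) = c • z := by
        simp [Fin.sum_univ_four]
      have h5 : (∑ j : Fin n ⊕ Fin n, (-(d j)) • Sum.elim x y j) = -(c • z) := by
        rw [← hd]
        simp
      rw [Fintype.sum_sum_type]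
      simp only [Sum.elim_inl, Sum.elim_inr]
      rw [h4, h5, add_neg_cancel]
  have hHsup : H = S ⊔ V := by
    rw [hH, Set.union_assoc, Submodule.span_union, hS, hV]
  constructor
  · -- Part 1
    intro 𝔞 hsub hrank
    set W : Submodule ℂ L :=
      Submodule.span ℂ {w : L | ∃ a ∈ 𝔞, ∃ v ∈ H, w = ⁅a, v⁆} with hW
    -- find a non-isotropic element of 𝔞
    have hfree : Module.Free ℂ 𝔞 := inferInstance
    have hfin : Module.Finite ℂ 𝔞 :=
      Module.finite_of_finrank_pos (by rw [hrank]; norm_num)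
    let B2 := Module.finBasisOfFinrankEq ℂ 𝔞 hrank
    have hli : LinearIndependent ℂ (fun i : Fin 2 => ((B2 i : 𝔞) : L)) :=
      B2.linearIndependent.map' (LieSubalgebra.toSubmodule 𝔞).subtype
        (Submodule.ker_subtype _)
    have hpair : ∀ c d : ℂ, c • ((B2 0 : 𝔞) : L) + d • ((B2 1 : 𝔞) : L) = 0 →
        c = 0 ∧ d = 0 := by
      intro c d hcd
      have := Fintype.linearIndependent_iff.mp hli ![c, d] ?_
      · exact ⟨this 0, this 1⟩
      · simpa [Fin.sum_univ_two] using hcd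
    obtain ⟨α₁, β₁, γ₁, hrep₁⟩ := mem_span_triple3 (hsub (B2 0).2)
    obtain ⟨α₂, β₂, γ₂, hrep₂⟩ := mem_span_triple3 (hsub (B2 1).2)
    have hgood : ∃ α β γ : ℂ, (α • h + β • e + γ • f) ∈ 𝔞 ∧ α ^ 2 + β * γ ≠ 0 := by
      by_contra hno
      push_neg at hno
      have hq : ∀ α β γ : ℂ, (α • h + β • e + γ • f) ∈ 𝔞 → α ^ 2 + β * γ = 0 := by
        intro α β γ hm
        by_contra hq0
        exact hq0 (hno α β γ hm)
      have hm₁ : (α₁ • h + β₁ • e + γ₁ • f) ∈ 𝔞 := hrep₁ ▸ (B2 0).2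
      have hm₂ : (α₂ • h + β₂ • e + γ₂ • f) ∈ 𝔞 := hrep₂ ▸ (B2 1).2
      have h1 := hq _ _ _ hm₁
      have h2 := hq _ _ _ hm₂
      have hsum : ((α₁ + α₂) • h + (β₁ + β₂) • e + (γ₁ + γ₂) • f) ∈ 𝔞 := by
        have : (α₁ + α₂) • h + (β₁ + β₂) • e + (γ₁ + γ₂) • f =
            (α₁ • h + β₁ • e + γ₁ • f) + (α₂ • h + β₂ • e + γ₂ • f) := by module
        rw [this]; exact add_mem hm₁ hm₂
      have h12 : 2 * (α₁ * α₂) + β₁ * γ₂ + β₂ * γ₁ = 0 := by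
        have := hq _ _ _ hsum
        ring_nf at this h1 h2 ⊢
        linear_combination this - h1 - h2
      by_cases hγ₁ : γ₁ = 0
      · have hα₁ : α₁ = 0 := by
          have : α₁ ^ 2 = 0 := by linear_combination h1 - β₁ * hγ₁
          exact pow_eq_zero_iff (n := 2) (by norm_num) |>.mp this
        have hβ₁ : β₁ ≠ 0 := by
          intro hβ₁
          have hg0 : ((B2 0 : 𝔞) : L) = 0 := by
            rw [hrep₁, hα₁, hβ₁, hγ₁]; module
          have := hpair 1 0 (by rw [hg0]; module)
          exact one_ne_zero this.1
        have hγ₂ : γ₂ = 0 := by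
          have : β₁ * γ₂ = 0 := by linear_combination h12 - (2 * α₂) * hα₁ - β₂ * hγ₁
          rcases mul_eq_zero.mp this with h' | h'
          · exact absurd h' hβ₁
          · exact h'
        have hα₂ : α₂ = 0 := by
          have : α₂ ^ 2 = 0 := by linear_combination h2 - β₂ * hγ₂
          exact pow_eq_zero_iff (n := 2) (by norm_num) |>.mp this
        have := hpair β₂ (-β₁) (by
          rw [hrep₁, hrep₂, hα₁, hγ₁, hα₂, hγ₂]; module)
        exact hβ₁ (neg_eq_zero.mp this.2)
      · set A := γ₁ * α₂ - γ₂ * α₁ with hA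
        set Bb := γ₁ * β₂ - γ₂ * β₁ with hBb
        have hwmem : (A • h + Bb • e + (0 : ℂ) • f) ∈ 𝔞 := by
          have : A • h + Bb • e + (0 : ℂ) • f =
              γ₁ • (α₂ • h + β₂ • e + γ₂ • f) - γ₂ • (α₁ • h + β₁ • e + γ₁ • f) := by
            rw [hA, hBb]; module
          rw [this]; exact sub_mem (Submodule.smul_mem _ _ hm₂) (Submodule.smul_mem _ _ hm₁)
        have hA0 : A = 0 := by
          have := hq _ _ _ hwmem
          have : A ^ 2 = 0 := by linear_combination this
          exact pow_eq_zero_iff (n := 2) (by norm_num) |>.mp this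
        have hB0 : Bb = 0 := by
          have hmem' : ((α₁ + A) • h + (β₁ + Bb) • e + γ₁ • f) ∈ 𝔞 := by
            have : (α₁ + A) • h + (β₁ + Bb) • e + γ₁ • f =
                (α₁ • h + β₁ • e + γ₁ • f) + (A • h + Bb • e + (0 : ℂ) • f) := by module
            rw [this]; exact add_mem hm₁ hwmem
          have h' := hq _ _ _ hmem'
          have : Bb * γ₁ = 0 := by
            linear_combination h' - h1 - (2 * α₁ + A) * hA0
          rcases mul_eq_zero.mp this with h'' | h''
          · exact h''
          · exact absurd h'' hγ₁
        have hzero : (-γ₂) • ((B2 0 : 𝔞) : L) + γ₁ • ((B2 1 : 𝔞) : L) = 0 := by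
          rw [hrep₁, hrep₂]
          have : (-γ₂) • (α₁ • h + β₁ • e + γ₁ • f) + γ₁ • (α₂ • h + β₂ • e + γ₂ • f) =
              A • h + Bb • e + (0 : ℂ) • f := by rw [hA, hBb]; module
          rw [this, hA0, hB0]; module
        exact hγ₁ ((hpair _ _ hzero).2)
    obtain ⟨α, β, γ, hamem, hq0⟩ := hgood
    -- W = V
    have hWle : W ≤ V := by
      rw [hW]
      apply Submodule.span_le.mpr
      rintro w ⟨a, ha, v, hv, rfl⟩
      exact hsl2H a (hsub ha) v hv
    have hVle : V ≤ W := by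
      rw [hV]
      apply Submodule.span_le.mpr
      rintro w (⟨i, rfl⟩ | ⟨i, rfl⟩)
      · have hu₁ : α • x i + γ • y i ∈ W :=
          Submodule.subset_span ⟨_, hamem, x i, hxmem i, (hax α β γ i).symm⟩
        have hu₂ : β • x i - α • y i ∈ W :=
          Submodule.subset_span ⟨_, hamem, y i, hymem i, (hay α β γ i).symm⟩
        have hxi : x i = (α ^ 2 + β * γ)⁻¹ •
            (α • (α • x i + γ • y i) + γ • (β • x i - α • y i)) := by
          have hx' : α • (α • x i + γ • y i) + γ • (β • x i - α • y i) =
              (α ^ 2 + β * γ) • x i := by module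
          rw [hx', inv_smul_smul₀ hq0]
        rw [hxi]
        exact Submodule.smul_mem _ _ (add_mem (Submodule.smul_mem _ _ hu₁)
          (Submodule.smul_mem _ _ hu₂))
      · have hu₁ : α • x i + γ • y i ∈ W :=
          Submodule.subset_span ⟨_, hamem, x i, hxmem i, (hax α β γ i).symm⟩
        have hu₂ : β • x i - α • y i ∈ W :=
          Submodule.subset_span ⟨_, hamem, y i, hymem i, (hay α β γ i).symm⟩
        have hyi : y i = (α ^ 2 + β * γ)⁻¹ •
            (β • (α • x i + γ • y i) - α • (β • x i - α • y i)) := by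
          have hy' : β • (α • x i + γ • y i) - α • (β • x i - α • y i) =
              (α ^ 2 + β * γ) • y i := by module
          rw [hy', inv_smul_smul₀ hq0]
        rw [hyi]
        exact Submodule.smul_mem _ _ (sub_mem (Submodule.smul_mem _ _ hu₁)
          (Submodule.smul_mem _ _ hu₂))
    have hWV : W = V := le_antisymm hWle hVle
    constructor
    · rw [hWV, hHsup, sup_comm]
    · rw [eq_bot_iff]
      rintro w ⟨hwW, hwS⟩
      obtain ⟨c, rfl⟩ := Submodule.mem_span_singleton.mp hwS
      have : c = 0 := hcz c (hWV ▸ hwW)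
      simp [this]
  · -- Part 2
    intro Φ hΦz hΦne
    have hΦS : ∀ w ∈ S, Φ w = 0 := by
      intro w hw
      obtain ⟨c, rfl⟩ := Submodule.mem_span_singleton.mp hw
      simp [hΦz]
    -- decomposition of any g
    have hdec : ∀ g : L, ∃ α β γ : ℂ, ∃ p ∈ H, g = α • h + β • e + γ • f + p := by
      intro g
      have hg : g ∈ Submodule.span ℂ ({h, e, f} : Set L) ⊔ H := by
        have hle : Submodule.span ℂ ({h, e, f, z} ∪ Set.range x ∪ Set.range y) ≤
            Submodule.span ℂ ({h, e, f} : Set L) ⊔ H := by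
          apply Submodule.span_le.mpr
          rintro w ((hw | ⟨i, rfl⟩) | ⟨i, rfl⟩)
          · rcases hw with rfl | rfl | rfl | rfl
            · exact Submodule.mem_sup_left (Submodule.subset_span (by simp))
            · exact Submodule.mem_sup_left (Submodule.subset_span (by simp))
            · exact Submodule.mem_sup_left (Submodule.subset_span (by simp))
            · exact Submodule.mem_sup_right hzmem
          · exact Submodule.mem_sup_right (hxmem i)
          · exact Submodule.mem_sup_right (hymem i)
        exact hle (hspan ▸ Submodule.mem_top)
      obtain ⟨s, hs, p, hp, rfl⟩ := Submodule.mem_sup.mp hg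
      obtain ⟨α, β, γ, rfl⟩ := mem_span_triple3 hs
      exact ⟨α, β, γ, p, hp, rfl⟩
    -- find index i₀ with a nonzero value
    have hi : ∃ i, Φ (x i) ≠ 0 ∨ Φ (y i) ≠ 0 := by
      by_contra hno
      push_neg at hno
      obtain ⟨v, hv, hΦv⟩ := hΦne
      apply hΦv
      have hker : H ≤ LinearMap.ker Φ := by
        rw [hH]
        apply Submodule.span_le.mpr
        rintro w ((rfl | ⟨i, rfl⟩) | ⟨i, rfl⟩)
        · simpa using hΦz
        · simpa using (hno i).1
        · simpa using (hno i).2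
      exact hker hv
    obtain ⟨i₀, hi₀⟩ := hi
    set a := Φ (x i₀) with ha
    set b := Φ (y i₀) with hb
    refine ⟨(a * b) • h + (b * b) • e + (-(a * a)) • f, ?_⟩
    intro g hg
    obtain ⟨α, β, γ, p, hp, rfl⟩ := hdec g
    have e1 : α * a + γ * b = 0 := by
      have h0 := hg (x i₀) (hxmem i₀)
      rw [add_lie, hax] at h0
      rw [map_add, map_add, map_smul, map_smul] at h0
      rw [hΦS _ (hbr p hp _ (hxmem i₀))] at h0
      simpa [← ha, ← hb, smul_eq_mul] using h0
    have e2 : β * a - α * b = 0 := by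
      have h0 := hg (y i₀) (hymem i₀)
      rw [add_lie, hay] at h0
      rw [map_add, map_sub, map_smul, map_smul] at h0
      rw [hΦS _ (hbr p hp _ (hymem i₀))] at h0
      simpa [← ha, ← hb, smul_eq_mul] using h0
    have hcase : ∃ c : ℂ, c * (a * b) = α ∧ c * (b * b) = β ∧ c * (-(a * a)) = γ := by
      by_cases hA : a = 0
      · have hB : b ≠ 0 := by
          rcases hi₀ with h' | h'
          · exact absurd hA h'
          · exact h'
        have hγ : γ = 0 := by
          have : γ * b = 0 := by linear_combination e1 - α * hA
          rcases mul_eq_zero.mp this with h' | h'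
          · exact h'
          · exact absurd h' hB
        have hα : α = 0 := by
          have : α * b = 0 := by linear_combination -e2 + β * hA
          rcases mul_eq_zero.mp this with h' | h'
          · exact h'
          · exact absurd h' hB
        refine ⟨β / (b * b), ?_, ?_, ?_⟩
        · rw [hA, hα]; ring
        · field_simp
        · rw [hA, hγ]; ring
      · by_cases hB : b = 0
        · have hα : α = 0 := by
            have : α * a = 0 := by linear_combination e1 - γ * hB
            rcases mul_eq_zero.mp this with h' | h'
            · exact h'
            · exact absurd h' hA
          have hβ : β = 0 := by
            have : β * a = 0 := by linear_combination e2 + α * hB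
            rcases mul_eq_zero.mp this with h' | h'
            · exact h'
            · exact absurd h' hA
          refine ⟨-(γ / (a * a)), ?_, ?_, ?_⟩
          · rw [hB, hα]; ring
          · rw [hB, hβ]; ring
          · field_simp
        · refine ⟨α / (a * b), ?_, ?_, ?_⟩
          · exact div_mul_cancel₀ α (mul_ne_zero hA hB)
          · rw [div_mul_eq_mul_div, div_eq_iff (mul_ne_zero hA hB)]
            linear_combination (-b) * e2
          · rw [div_mul_eq_mul_div, div_eq_iff (mul_ne_zero hA hB)]
            linear_combination (-a) * e1
    obtain ⟨c, hc1, hc2, hc3⟩ := hcase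
    refine ⟨c, ?_⟩
    have : α • h + β • e + γ • f + p -
        c • ((a * b) • h + (b * b) • e + (-(a * a)) • f) = p := by
      rw [← hc1, ← hc2, ← hc3]
      module
    rw [this]
    exact hp
end

section
/- Let ℒ be the (twisted) Heisenberg–Virasoro-type setting: 𝔭 is spanned by {I_n : n ∈ ℤ} ∪ {z₁,z₂,z₃} inside the Heisenberg–Virasoro algebra ℒ with brackets [L_m, L_n] = (n−m)L_{m+n} + ((m³−m)/12)δ_{m+n,0}z₁, [I_m, I_n] = m δ_{m+n,0} z₃, [L_m, I_n] = n I_{m+n} + δ_{m+n,0}(m²+m)z₂, and I₀, z₁, z₂, z₃ central. Fix k ∈ ℤ and let φ : 𝔭 → ℂ be the Lie algebra homomorphism with φ(I_k) = 1, φ(I_n) = 0 for n ≠ k, and φ(z₁) = φ(z₂) = φ(z₃) = 0. Then the Whittaker annihilator ℒ^φ equals ℂL_k ⊕ 𝔭. -/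
/-- For the Heisenberg–Virasoro algebra `ℒ` with ideal `𝔭 = span{I_n, z₁, z₂, z₃}` and
the homomorphism `φ` with `φ(I_k) = 1`, `φ(I_n) = 0 (n ≠ k)`, `φ(z₁)=φ(z₂)=φ(z₃)=0`
(represented by a functional `Φ` on `ℒ`), the Whittaker annihilator is `ℂL_k ⊕ 𝔭`. -/
theorem stmt11 {𝔤 : Type*} [LieRing 𝔤] [LieAlgebra ℂ 𝔤]
    (Lf If : ℤ → 𝔤) (z₁ z₂ z₃ : 𝔤)
    (hLL : ∀ m n : ℤ, ⁅Lf m, Lf n⁆ = ((n : ℂ) - m) • Lf (m + n) +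
      (if m + n = 0 then ((m : ℂ) ^ 3 - m) / 12 else 0) • z₁)
    (hII : ∀ m n : ℤ, ⁅If m, If n⁆ = (if m + n = 0 then (m : ℂ) else 0) • z₃)
    (hLI : ∀ m n : ℤ, ⁅Lf m, If n⁆ = (n : ℂ) • If (m + n) +
      (if m + n = 0 then ((m : ℂ) ^ 2 + m) else 0) • z₂)
    (hz₁ : ∀ g : 𝔤, ⁅z₁, g⁆ = 0) (hz₂ : ∀ g : 𝔤, ⁅z₂, g⁆ = 0)
    (hz₃ : ∀ g : 𝔤, ⁅z₃, g⁆ = 0)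
    (hind : LinearIndependent ℂ (Sum.elim Lf (Sum.elim If ![z₁, z₂, z₃])))
    (hspan : Submodule.span ℂ (Set.range Lf ∪ Set.range If ∪ {z₁, z₂, z₃}) = ⊤)
    (P : Submodule ℂ 𝔤) (hP : P = Submodule.span ℂ (Set.range If ∪ {z₁, z₂, z₃}))
    (k : ℤ) (Φ : 𝔤 →ₗ[ℂ] ℂ)
    (hΦk : Φ (If k) = 1) (hΦn : ∀ n : ℤ, n ≠ k → Φ (If n) = 0)
    (hΦz : Φ z₁ = 0 ∧ Φ z₂ = 0 ∧ Φ z₃ = 0) :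
    {g : 𝔤 | ∀ p ∈ P, Φ ⁅g, p⁆ = 0} =
      ↑(Submodule.span ℂ ({Lf k} ∪ Set.range If ∪ {z₁, z₂, z₃})) := by
  -- the bilinear evaluation
  set B : 𝔤 → 𝔤 →ₗ[ℂ] ℂ := fun x =>
    { toFun := fun g => Φ ⁅g, x⁆
      map_add' := fun a b => by show Φ ⁅a + b, x⁆ = _; rw [add_lie, map_add]
      map_smul' := fun a b => by show Φ ⁅a • b, x⁆ = _; rw [smul_lie, map_smul]; rfl } with hB
  have hBapp : ∀ g x : 𝔤, B x g = Φ ⁅g, x⁆ := fun _ _ => rfl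
  have hΦI : ∀ n : ℤ, Φ (If n) = if n = k then 1 else 0 := by
    intro n; by_cases h : n = k
    · simp [h, hΦk]
    · simp [h, hΦn n h]
  have hgen : ∀ m n : ℤ, Φ ⁅Lf m, If n⁆ = (n : ℂ) * (if m + n = k then 1 else 0) := by
    intro m n
    rw [hLI, map_add, map_smul, map_smul, hΦI, hΦz.2.1, smul_zero, add_zero, smul_eq_mul]
  -- forward inclusion: the span annihilates
  have ann : ∀ g ∈ Submodule.span ℂ ({Lf k} ∪ Set.range If ∪ ({z₁, z₂, z₃} : Set 𝔤)),
      ∀ p ∈ P, Φ ⁅g, p⁆ = 0 := by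
    intro g hg p hp
    rw [hP] at hp
    -- first reduce in p
    induction hp using Submodule.span_induction with
    | mem p hpmem =>
      rw [← hBapp]
      induction hg using Submodule.span_induction with
      | mem g hgmem =>
        rw [hBapp]
        rcases hpmem with ⟨n, rfl⟩ | hpz
        · -- p = If n
          rcases hgmem with (rfl | ⟨m, rfl⟩) | hgz
          · rw [hgen]
            by_cases h : n = 0
            · simp [h]
            · have : k + n ≠ k := by omega
              simp [this]
          · rw [hII, map_smul, hΦz.2.2, smul_zero]
          · rcases hgz with rfl | rfl | rfl
            all_goals simp [hz₁, hz₂, hz₃]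
        · -- p is a central element
          have hzp : ⁅g, p⁆ = 0 := by
            rw [← lie_skew]
            rcases hpz with rfl | rfl | rfl
            · rw [hz₁ g, neg_zero]
            · rw [hz₂ g, neg_zero]
            · rw [hz₃ g, neg_zero]
          rw [hzp, map_zero]
      | zero => simp
      | add a b _ _ ha hb => rw [map_add, ha, hb, add_zero]
      | smul c a _ ha => rw [map_smul, ha, smul_zero]
    | zero => simp
    | add a b _ _ ha hb => rw [lie_add, map_add, ha, hb, add_zero]
    | smul c a _ ha => rw [lie_smul, map_smul, ha, smul_zero]
  ext g
  simp only [Set.mem_setOf_eq, SetLike.mem_coe]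
  constructor
  · intro hg
    -- decompose g = s + q
    have hsup : (Submodule.span ℂ (Set.range Lf) ⊔
        Submodule.span ℂ (Set.range If ∪ ({z₁, z₂, z₃} : Set 𝔤))) = ⊤ := by
      rw [← Submodule.span_union, ← hspan, Set.union_assoc]
    have hgmem : g ∈ Submodule.span ℂ (Set.range Lf) ⊔
        Submodule.span ℂ (Set.range If ∪ ({z₁, z₂, z₃} : Set 𝔤)) := by
      rw [hsup]; trivial
    obtain ⟨s, hs, q, hq, rfl⟩ := Submodule.mem_sup.mp hgmem
    have hqQ : q ∈ Submodule.span ℂ ({Lf k} ∪ Set.range If ∪ ({z₁, z₂, z₃} : Set 𝔤)) := by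
      refine Submodule.span_mono ?_ hq
      intro x hx
      rcases hx with hx | hx
      · exact Or.inl (Or.inr hx)
      · exact Or.inr hx
    -- q satisfies annihilation too
    have hq' : ∀ p ∈ P, Φ ⁅q, p⁆ = 0 := ann q hqQ
    have hs' : ∀ p ∈ P, Φ ⁅s, p⁆ = 0 := by
      intro p hp
      have := hg p hp
      rw [add_lie, map_add, hq' p hp, add_zero] at this
      exact this
    -- write s as a finite combination of Lf
    obtain ⟨c, hc⟩ := Finsupp.mem_span_range_iff_exists_finsupp.mp hs
    have hBs : ∀ n : ℤ, Φ ⁅s, If n⁆ =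
        c.sum fun m a => a * ((n : ℂ) * (if m + n = k then 1 else 0)) := by
      intro n
      rw [← hBapp, ← hc, map_finsuppSum]
      refine Finsupp.sum_congr fun m _ => ?_
      rw [map_smul, hBapp, hgen, smul_eq_mul]
    have hc0 : ∀ m : ℤ, m ≠ k → c m = 0 := by
      intro m₀ hm₀
      have hPmem : If (k - m₀) ∈ P := by
        rw [hP]
        exact Submodule.subset_span (Or.inl ⟨k - m₀, rfl⟩)
      have h0 := hs' (If (k - m₀)) hPmem
      rw [hBs] at h0
      have hsum : (c.sum fun m a => a * (((k - m₀ : ℤ) : ℂ) *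
          (if m + (k - m₀) = k then 1 else 0))) = c m₀ * ((k - m₀ : ℤ) : ℂ) := by
        rw [Finsupp.sum]
        have : ∀ m ∈ c.support, c m * (((k - m₀ : ℤ) : ℂ) *
            (if m + (k - m₀) = k then 1 else 0)) =
            if m = m₀ then c m * ((k - m₀ : ℤ) : ℂ) else 0 := by
          intro m _
          by_cases h : m = m₀
          · have : m + (k - m₀) = k := by omega
            simp [h, this]
          · have : m + (k - m₀) ≠ k := by omega
            simp [h, this]
        rw [Finset.sum_congr rfl this, Finset.sum_ite_eq' c.support m₀
          (fun m => c m * ((k - m₀ : ℤ) : ℂ))]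
        by_cases h : m₀ ∈ c.support
        · simp [h]
        · simp [h, Finsupp.notMem_support_iff.mp h]
      rw [hsum] at h0
      have hne : ((k - m₀ : ℤ) : ℂ) ≠ 0 := by
        simp only [ne_eq, Int.cast_eq_zero]
        omega
      exact (mul_eq_zero.mp h0).resolve_right hne
    have hsval : s = c k • Lf k := by
      rw [← hc, Finsupp.sum]
      have hsub : c.support ⊆ {k} := fun m hm => by
        simp only [Finset.mem_singleton]
        by_contra h
        exact Finsupp.mem_support_iff.mp hm (hc0 m h)
      rw [Finset.sum_subset hsub (fun x _ hx =>
        by rw [Finsupp.notMem_support_iff.mp hx, zero_smul]), Finset.sum_singleton]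
    apply Submodule.add_mem
    · rw [hsval]
      exact Submodule.smul_mem _ _ (Submodule.subset_span (Or.inl (Or.inl rfl)))
    · exact hqQ
  · exact ann g
end

section
/- Let ℒ be the Heisenberg–Virasoro algebra and 𝔭 = span{I_n, z₁, z₂, z₃ : n ∈ ℤ}. Let φ : 𝔭 → ℂ be a finite Lie algebra homomorphism (φ(z₂) = φ(z₃) = 0 and S^φ = {n : φ(I_n) ≠ 0} finite) with φ nonzero on span{I_n}. If |S^φ| ≥ 2, then the Whittaker annihilator ℒ^φ equals 𝔭; i.e., no nonzero element of span{L_m : m ∈ ℤ} lies in ℒ^φ. -/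
lemma keylem (φc : ℤ → ℂ) (hfin : {n : ℤ | φc n ≠ 0}.Finite)
    (hcard : 2 ≤ hfin.toFinset.card) (c : ℤ →₀ ℂ)
    (h : ∀ n : ℤ, n ≠ 0 → (c.sum fun m a => a * φc (m + n)) = 0) : c = 0 := by
  by_contra hc
  have hsupp : c.support.Nonempty := Finsupp.support_nonempty_iff.mpr hc
  set T := hfin.toFinset with hT
  have hTne : T.Nonempty := Finset.card_pos.mp (by omega)
  set s := T.max' hTne with hs
  set t := T.min' hTne with ht
  have hts : t < s := by
    obtain ⟨a, ha, b, hb, hab⟩ := Finset.one_lt_card.mp (by omega : 1 < T.card)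
    have h1 := T.min'_le a ha; have h2 := T.min'_le b hb
    have h3 := T.le_max' a ha; have h4 := T.le_max' b hb
    omega
  have hφs : φc s ≠ 0 := hfin.mem_toFinset.mp (T.max'_mem hTne)
  have hφt : φc t ≠ 0 := hfin.mem_toFinset.mp (T.min'_mem hTne)
  set k := c.support.max' hsupp with hk
  set k' := c.support.min' hsupp with hk'
  have hck : c k ≠ 0 := Finsupp.mem_support_iff.mp (c.support.max'_mem hsupp)
  have hck' : c k' ≠ 0 := Finsupp.mem_support_iff.mp (c.support.min'_mem hsupp)
  by_cases hsk : s = k'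
  · have hk'k : k' ≤ k := c.support.min'_le k (c.support.max'_mem hsupp)
    have hn : t - k ≠ 0 := by omega
    have heq := h (t - k) hn
    rw [Finsupp.sum, Finset.sum_eq_single_of_mem k (c.support.max'_mem hsupp)] at heq
    · rw [show k + (t - k) = t by ring] at heq
      rcases mul_eq_zero.mp heq with h' | h'
      exacts [hck h', hφt h']
    · intro b hb hbk
      have hble : b ≤ k := c.support.le_max' b hb
      have hz : φc (b + (t - k)) = 0 := by
        by_contra hne
        have hmem : b + (t - k) ∈ T := by exact hfin.mem_toFinset.mpr hne
        have := T.min'_le _ hmem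
        omega
      rw [hz, mul_zero]
  · have hn : s - k' ≠ 0 := by omega
    have heq := h (s - k') hn
    rw [Finsupp.sum, Finset.sum_eq_single_of_mem k' (c.support.min'_mem hsupp)] at heq
    · rw [show k' + (s - k') = s by ring] at heq
      rcases mul_eq_zero.mp heq with h' | h'
      exacts [hck' h', hφs h']
    · intro b hb hbk
      have hble : k' ≤ b := c.support.min'_le b hb
      have hz : φc (b + (s - k')) = 0 := by
        by_contra hne
        have hmem : b + (s - k') ∈ T := by exact hfin.mem_toFinset.mpr hne
        have := T.le_max' _ hmem
        omega
      rw [hz, mul_zero]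


/-- For the Heisenberg–Virasoro algebra `ℒ` with ideal `𝔭 = span{I_n, z₁, z₂, z₃}` and a
finite Lie algebra homomorphism `φ` (i.e. `φ(z₂) = φ(z₃) = 0` and
`S^φ = {n | φ(I_n) ≠ 0}` finite) with `|S^φ| ≥ 2`, the Whittaker annihilator `ℒ^φ`
equals `𝔭`. -/
theorem stmt12 {𝔤 : Type*} [LieRing 𝔤] [LieAlgebra ℂ 𝔤]
    (Lf If : ℤ → 𝔤) (z₁ z₂ z₃ : 𝔤)
    (hLL : ∀ m n : ℤ, ⁅Lf m, Lf n⁆ = ((n : ℂ) - m) • Lf (m + n) +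
      (if m + n = 0 then ((m : ℂ) ^ 3 - m) / 12 else 0) • z₁)
    (hII : ∀ m n : ℤ, ⁅If m, If n⁆ = (if m + n = 0 then (m : ℂ) else 0) • z₃)
    (hLI : ∀ m n : ℤ, ⁅Lf m, If n⁆ = (n : ℂ) • If (m + n) +
      (if m + n = 0 then ((m : ℂ) ^ 2 + m) else 0) • z₂)
    (hz₁ : ∀ g : 𝔤, ⁅z₁, g⁆ = 0) (hz₂ : ∀ g : 𝔤, ⁅z₂, g⁆ = 0)
    (hz₃ : ∀ g : 𝔤, ⁅z₃, g⁆ = 0)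
    (hind : LinearIndependent ℂ (Sum.elim Lf (Sum.elim If ![z₁, z₂, z₃])))
    (hspan : Submodule.span ℂ (Set.range Lf ∪ Set.range If ∪ {z₁, z₂, z₃}) = ⊤)
    (P : Submodule ℂ 𝔤) (hP : P = Submodule.span ℂ (Set.range If ∪ {z₁, z₂, z₃}))
    (Φ : 𝔤 →ₗ[ℂ] ℂ)
    (hΦz₂ : Φ z₂ = 0) (hΦz₃ : Φ z₃ = 0)
    (hfin : {n : ℤ | Φ (If n) ≠ 0}.Finite)
    (hcard : 2 ≤ hfin.toFinset.card) :
    {g : 𝔤 | ∀ p ∈ P, Φ ⁅g, p⁆ = 0} = (P : Set 𝔤) := by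
  -- brackets of generators of P with anything in P have Φ-value 0
  have hgenlie : ∀ x ∈ Set.range If ∪ {z₁, z₂, z₃}, ∀ y ∈ Set.range If ∪ {z₁, z₂, z₃},
      Φ ⁅x, y⁆ = 0 := by
    rintro x (⟨m, rfl⟩ | hx) y (⟨n, rfl⟩ | hy)
    · rw [hII, map_smul, hΦz₃, smul_zero]
    · rcases hy with rfl | rfl | rfl
      · rw [← lie_skew, hz₁, neg_zero, map_zero]
      · rw [← lie_skew, hz₂, neg_zero, map_zero]
      · rw [← lie_skew, hz₃, neg_zero, map_zero]
    · rcases hx with rfl | rfl | rfl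
      · rw [hz₁, map_zero]
      · rw [hz₂, map_zero]
      · rw [hz₃, map_zero]
    · rcases hx with rfl | rfl | rfl
      · rw [hz₁, map_zero]
      · rw [hz₂, map_zero]
      · rw [hz₃, map_zero]
  have hPann : ∀ p ∈ P, ∀ q ∈ P, Φ ⁅p, q⁆ = 0 := by
    rw [hP]
    intro p hp
    induction hp using Submodule.span_induction with
    | mem x hx =>
      intro q hq
      induction hq using Submodule.span_induction with
      | mem y hy => exact hgenlie x hx y hy
      | zero => rw [lie_zero, map_zero]
      | add y z _ _ h1 h2 => rw [lie_add, map_add, h1, h2, add_zero]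
      | smul a y _ h1 => rw [lie_smul, map_smul, h1, smul_zero]
    | zero => intro q hq; rw [zero_lie, map_zero]
    | add x y _ _ h1 h2 => intro q hq; rw [add_lie, map_add, h1 q hq, h2 q hq, add_zero]
    | smul a x _ h1 => intro q hq; rw [smul_lie, map_smul, h1 q hq, smul_zero]
  ext g
  simp only [Set.mem_setOf_eq, SetLike.mem_coe]
  constructor
  · intro hg
    have hgtop : g ∈ Submodule.span ℂ (Set.range Lf ∪ (Set.range If ∪ {z₁, z₂, z₃})) := by
      rw [← Set.union_assoc, hspan]; trivial
    rw [Submodule.span_union, Submodule.mem_sup] at hgtop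
    obtain ⟨l, hl, p, hp, rfl⟩ := hgtop
    rw [← hP] at hp
    obtain ⟨c, rfl⟩ := Finsupp.mem_span_range_iff_exists_finsupp.mp hl
    -- show each Φ⁅Lf-part, If n⁆ gives an equation
    have hIfP : ∀ n : ℤ, If n ∈ P := fun n => by
      rw [hP]; exact Submodule.subset_span (Or.inl ⟨n, rfl⟩)
    have hkey : ∀ n : ℤ, (n : ℂ) * (c.sum fun m a => a * Φ (If (m + n))) = 0 := by
      intro n
      have h1 := hg (If n) (hIfP n)
      rw [add_lie, map_add, hPann p hp (If n) (hIfP n), add_zero] at h1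
      set B : 𝔤 →ₗ[ℂ] ℂ :=
        { toFun := fun x => Φ ⁅x, If n⁆
          map_add' := fun x y => by simp [add_lie]
          map_smul' := fun a x => by simp [smul_lie] } with hB
      have h1' : ∑ m ∈ c.support, B (c m • Lf m) = 0 := by
        rw [← map_sum]; exact h1
      rw [Finsupp.sum, Finset.mul_sum, ← h1']
      apply Finset.sum_congr rfl
      intro m _
      rw [hB]
      simp only [LinearMap.coe_mk, AddHom.coe_mk]
      rw [smul_lie, map_smul, hLI, map_add, map_smul, map_smul, hΦz₂, smul_zero,
        add_zero, smul_eq_mul, smul_eq_mul]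
      ring
    have hc0 : c = 0 := by
      apply keylem (fun j => Φ (If j)) hfin hcard
      intro n hn
      have := hkey n
      rcases mul_eq_zero.mp this with h' | h'
      · exact absurd (Int.cast_injective (h'.trans (Int.cast_zero (R := ℂ)).symm)) hn
      · exact h'
    rw [hc0, Finsupp.sum_zero_index, zero_add]
    exact hp
  · intro hg q hq
    exact hPann g hg q hq
end

section
/- Let 𝒲(a,b) be the Lie algebra with basis {L_i, H_i : i ∈ ℤ} and brackets [L_i,L_j] = (j−i)L_{i+j}, [L_i,H_j] = (a+j+bi)H_{i+j}, [H_i,H_j] = 0, where a, b ∈ ℂ. Let 𝔭 = span{H_i}. Let φ : 𝔭 → ℂ be a nonzero linear map that is upper finite (φ(H_j) = 0 for all sufficiently large j), let j₀ = max{j : φ(H_j) ≠ 0}, and let x = λ_i L_i + λ_{i+1}L_{i+1} + ⋯ + λ_j L_j (λ_i ≠ 0) be a nonzero element of span{L_m} lying in the Whittaker annihilator 𝔤^φ. Then a + j₀ = (1−b)·i, i.e., a + j₀ = (1−b)·h(x) where h(x) is the smallest index appearing in x. -/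
private lemma mySumLie {𝔤 : Type*} [LieRing 𝔤] {α : Type*} (s : Finset α)
    (f : α → 𝔤) (y : 𝔤) : ⁅∑ m ∈ s, f m, y⁆ = ∑ m ∈ s, ⁅f m, y⁆ :=
  map_sum (AddMonoidHom.mk' (⁅·, y⁆) (fun u v => add_lie u v y)) f s

/-- In `𝒲(a,b)` with abelian ideal `𝔭 = span{H_i}`, if `φ` (represented by a
functional `Φ`) is nonzero and upper finite with maximal support index `j₀`, and
`x = Σ_{m=i}^{j} λ_m L_m` with `λ_i ≠ 0` lies in the Whittaker annihilator `𝔤^φ`,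
then `a + j₀ = (1 - b)·i`, i.e. `a + j₀ = (1-b)·h(x)` for the head `h(x) = i`. -/
theorem stmt13 {𝔤 : Type*} [LieRing 𝔤] [LieAlgebra ℂ 𝔤] (a b : ℂ)
    (Lf Hf : ℤ → 𝔤)
    (hLL : ∀ m n : ℤ, ⁅Lf m, Lf n⁆ = ((n : ℂ) - m) • Lf (m + n))
    (hLH : ∀ m n : ℤ, ⁅Lf m, Hf n⁆ = (a + n + b * m) • Hf (m + n))
    (hHH : ∀ m n : ℤ, ⁅Hf m, Hf n⁆ = 0)
    (Φ : 𝔤 →ₗ[ℂ] ℂ) (j₀ : ℤ)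
    (hj₀ : Φ (Hf j₀) ≠ 0) (hupper : ∀ j : ℤ, j₀ < j → Φ (Hf j) = 0)
    (i j : ℤ) (hij : i ≤ j) (lam : ℤ → ℂ) (hlami : lam i ≠ 0)
    (x : 𝔤) (hx : x = ∑ m ∈ Finset.Icc i j, lam m • Lf m)
    (hann : ∀ n : ℤ, Φ ⁅x, Hf n⁆ = 0) :
    a + (j₀ : ℂ) = (1 - b) * (i : ℂ) := by
  have key := hann (j₀ - i)
  rw [hx, mySumLie, map_sum] at key
  have hcong : ∀ m ∈ Finset.Icc i j, Φ ⁅lam m • Lf m, Hf (j₀ - i)⁆ =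
      lam m * ((a + ((j₀ : ℂ) - i) + b * m) * Φ (Hf (m + (j₀ - i)))) := by
    intro m _
    rw [smul_lie, hLH, map_smul, map_smul]
    simp only [smul_eq_mul]
    push_cast
    ring
  rw [Finset.sum_congr rfl hcong] at key
  have hz : ∀ m ∈ Finset.Icc i j, m ≠ i →
      lam m * ((a + ((j₀ : ℂ) - i) + b * m) * Φ (Hf (m + (j₀ - i)))) = 0 := by
    intro m hm hmi
    have h1 := (Finset.mem_Icc.mp hm).1
    rw [hupper (m + (j₀ - i)) (by omega), mul_zero, mul_zero]
  rw [Finset.sum_eq_single_of_mem i (Finset.mem_Icc.mpr ⟨le_refl i, hij⟩) hz] at key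
  rw [show i + (j₀ - i) = j₀ by omega] at key
  rcases mul_eq_zero.mp key with h | h
  · exact absurd h hlami
  rcases mul_eq_zero.mp h with h | h
  · linear_combination h
  · exact absurd h hj₀
end

section
/- Let 𝒲(a,1) be the Lie algebra with basis {L_i, H_i : i ∈ ℤ}, brackets [L_i,L_j] = (j−i)L_{i+j}, [L_i,H_j] = (a+j+i)H_{i+j}, [H_i,H_j] = 0 (i.e., b = 1), and 𝔭 = span{H_i}. Let φ : 𝔭 → ℂ be a nonzero upper finite linear map with maximal support index j₀. Then the Whittaker annihilator 𝔤^φ strictly contains 𝔭 if and only if the support of φ is exactly {j₀} and a = −j₀. -/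
/-- Key combinatorial lemma: if an upper-finite sequence `ψ` satisfies a family of
convolution equations against a nonzero finitely-supported `c`, then `ψ = 0`. -/
lemma stmt14_key (T : Finset ℤ) (c : ℤ → ℂ) (m₀ : ℤ) (hm₀ : m₀ ∈ T) (hc : c m₀ ≠ 0)
    (hmin : ∀ m ∈ T, c m ≠ 0 → m₀ ≤ m) (ψ : ℤ → ℂ) (K : ℤ) (hK : ∀ j, K < j → ψ j = 0)
    (heq : ∀ n : ℤ, ∑ m ∈ T, c m * ψ (m + n) = 0) : ∀ j, ψ j = 0 := by
  by_contra h
  push_neg at h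
  obtain ⟨J, hJ, hJmax⟩ := Int.exists_greatest_of_bdd (P := fun z => ψ z ≠ 0)
    ⟨K, fun z hz => by by_contra hb; exact hz (hK z (lt_of_not_ge hb))⟩ h
  have h0 := heq (J - m₀)
  rw [Finset.sum_eq_single_of_mem m₀ hm₀ ?_] at h0
  · have : m₀ + (J - m₀) = J := by ring
    rw [this] at h0
    exact hJ (by
      rcases mul_eq_zero.1 h0 with h | h
      · exact absurd h hc
      · exact h)
  · intro m hm hne
    by_cases hcm : c m = 0
    · rw [hcm, zero_mul]
    · have h1 : m₀ < m := lt_of_le_of_ne (hmin m hm hcm) (Ne.symm hne)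
      have h2 : J < m + (J - m₀) := by omega
      have h3 : ψ (m + (J - m₀)) = 0 := by
        by_contra h4
        exact absurd (hJmax _ h4) (not_le.2 h2)
      rw [h3, mul_zero]

/-- In `𝒲(a,1)` (the case `b = 1`) with abelian ideal `𝔭 = span{H_i}` and `φ`
(represented by `Φ`) nonzero upper finite with maximal support index `j₀`, the
Whittaker annihilator strictly contains `𝔭` if and only if the support of `φ` is
exactly `{j₀}` and `a = -j₀`. -/
theorem stmt14 {𝔤 : Type*} [LieRing 𝔤] [LieAlgebra ℂ 𝔤] (a : ℂ)
    (Lf Hf : ℤ → 𝔤)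
    (hLL : ∀ m n : ℤ, ⁅Lf m, Lf n⁆ = ((n : ℂ) - m) • Lf (m + n))
    (hLH : ∀ m n : ℤ, ⁅Lf m, Hf n⁆ = (a + n + 1 * m) • Hf (m + n))
    (hHH : ∀ m n : ℤ, ⁅Hf m, Hf n⁆ = 0)
    (hind : LinearIndependent ℂ (Sum.elim Lf Hf))
    (hspan : Submodule.span ℂ (Set.range Lf ∪ Set.range Hf) = ⊤)
    (P : Submodule ℂ 𝔤) (hP : P = Submodule.span ℂ (Set.range Hf))
    (Φ : 𝔤 →ₗ[ℂ] ℂ) (j₀ : ℤ)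
    (hj₀ : Φ (Hf j₀) ≠ 0) (hupper : ∀ j : ℤ, j₀ < j → Φ (Hf j) = 0) :
    (∃ x : 𝔤, x ∉ P ∧ ∀ p ∈ P, Φ ⁅x, p⁆ = 0) ↔
      ((∀ j : ℤ, j ≠ j₀ → Φ (Hf j) = 0) ∧ a = -(j₀ : ℂ)) := by
  classical
  have hspan' : ⊤ ≤ Submodule.span ℂ (Set.range (Sum.elim Lf Hf)) := by
    rw [Set.Sum.elim_range, hspan]
  let B : Module.Basis (ℤ ⊕ ℤ) ℂ 𝔤 := Module.Basis.mk hind hspan'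
  have hBl : ∀ m, B (Sum.inl m) = Lf m := fun m => by simp [B]
  have hBr : ∀ m, B (Sum.inr m) = Hf m := fun m => by simp [B]
  have hHfP : ∀ n, Hf n ∈ P := fun n => by
    rw [hP]; exact Submodule.subset_span ⟨n, rfl⟩
  constructor
  · rintro ⟨x, hxP, hx⟩
    set d : (ℤ ⊕ ℤ) →₀ ℂ := B.repr x with hd
    have hx_eq : (d.sum fun i k => k • B i) = x := by
      rw [← Finsupp.linearCombination_apply]; exact B.linearCombination_repr x
    -- c is nonzero somewhere
    have hcne : ∃ m, d (Sum.inl m) ≠ 0 := by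
      by_contra hcon
      push_neg at hcon
      apply hxP
      rw [← hx_eq]
      refine Submodule.sum_mem _ fun i hi => ?_
      rcases i with m | m
      · exact absurd (hcon m) (Finsupp.mem_support_iff.1 hi)
      · show d (Sum.inr m) • B (Sum.inr m) ∈ P
        rw [hBr]; exact Submodule.smul_mem _ _ (hHfP m)
    set ψ : ℤ → ℂ := fun j => (a + j) * Φ (Hf j) with hψdef
    set T : Finset ℤ := d.support.preimage Sum.inl Sum.inl_injective.injOn with hT
    have hmemT : ∀ m, m ∈ T ↔ d (Sum.inl m) ≠ 0 := fun m => by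
      rw [hT, Finset.mem_preimage, Finsupp.mem_support_iff]
    -- the convolution equations
    have heq : ∀ n : ℤ, ∑ m ∈ T, d (Sum.inl m) * ψ (m + n) = 0 := by
      intro n
      set F : 𝔤 →ₗ[ℂ] ℂ := -(Φ ∘ₗ (LieAlgebra.ad ℂ 𝔤 (Hf n))) with hFdef
      have hF : ∀ y : 𝔤, Φ ⁅y, Hf n⁆ = F y := by
        intro y
        rw [hFdef, LinearMap.neg_apply, LinearMap.comp_apply, LieAlgebra.ad_apply,
          ← map_neg, lie_skew]
      have hΦ : Φ ⁅x, Hf n⁆ = ∑ i ∈ d.support, d i * Φ ⁅B i, Hf n⁆ := by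
        rw [hF x, ← hx_eq, Finsupp.sum, map_sum]
        exact Finset.sum_congr rfl fun i _ => by
          rw [map_smul, smul_eq_mul, hF (B i)]
      have hzero : Φ ⁅x, Hf n⁆ = 0 := hx _ (hHfP n)
      have hpre : ∑ m ∈ T, d (Sum.inl m) * Φ ⁅B (Sum.inl m), Hf n⁆
          = ∑ i ∈ d.support, d i * Φ ⁅B i, Hf n⁆ := by
        refine Finset.sum_preimage Sum.inl d.support _ (fun i => d i * Φ ⁅B i, Hf n⁆) ?_
        intro i _ hi
        rcases i with m | m
        · exact absurd ⟨m, rfl⟩ hi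
        · show d (Sum.inr m) * Φ ⁅B (Sum.inr m), Hf n⁆ = 0
          rw [hBr, hHH, map_zero, mul_zero]
      have hterm : ∀ m : ℤ, d (Sum.inl m) * Φ ⁅B (Sum.inl m), Hf n⁆
          = d (Sum.inl m) * ψ (m + n) := by
        intro m
        rw [hBl, hLH, map_smul, smul_eq_mul, hψdef]
        push_cast
        ring_nf
      calc ∑ m ∈ T, d (Sum.inl m) * ψ (m + n)
          = ∑ m ∈ T, d (Sum.inl m) * Φ ⁅B (Sum.inl m), Hf n⁆ :=
            Finset.sum_congr rfl fun m _ => (hterm m).symm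
        _ = ∑ i ∈ d.support, d i * Φ ⁅B i, Hf n⁆ := hpre
        _ = 0 := by rw [← hΦ, hzero]
    -- apply the key lemma
    obtain ⟨m₁, hm₁⟩ := hcne
    have hTne : T.Nonempty := ⟨m₁, (hmemT m₁).2 hm₁⟩
    set m₀ := T.min' hTne with hm₀def
    have hψzero : ∀ j, ψ j = 0 := by
      refine stmt14_key T (fun m => d (Sum.inl m)) m₀ (T.min'_mem hTne)
        ((hmemT m₀).1 (T.min'_mem hTne)) (fun m hm _ => T.min'_le m hm) ψ j₀
        (fun j hj => by rw [hψdef]; simp [hupper j hj]) heq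
    have ha : a = -(j₀ : ℂ) := by
      have := hψzero j₀
      rw [hψdef] at this
      rcases mul_eq_zero.1 this with h | h
      · linear_combination h
      · exact absurd h hj₀
    refine ⟨fun j hj => ?_, ha⟩
    have := hψzero j
    rw [hψdef] at this
    rcases mul_eq_zero.1 this with h | h
    · exfalso
      rw [ha] at h
      have : (j : ℂ) = (j₀ : ℂ) := by linear_combination h
      exact hj (by exact_mod_cast this)
    · exact h
  · rintro ⟨hsupp, ha⟩
    refine ⟨Lf 0, ?_, ?_⟩
    · intro hmem
      have hcoord : P ≤ LinearMap.ker (B.coord (Sum.inl 0)) := by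
        rw [hP, Submodule.span_le]
        rintro _ ⟨m, rfl⟩
        rw [SetLike.mem_coe, LinearMap.mem_ker, ← hBr m, Module.Basis.coord_apply, Module.Basis.repr_self]
        simp
      have h1 : B.coord (Sum.inl 0) (Lf 0) = 0 := hcoord hmem
      rw [← hBl 0, Module.Basis.coord_apply, Module.Basis.repr_self] at h1
      simp at h1
    · intro p hp
      have hker : P ≤ LinearMap.ker (Φ ∘ₗ (LieAlgebra.ad ℂ 𝔤 (Lf 0))) := by
        rw [hP, Submodule.span_le]
        rintro _ ⟨n, rfl⟩
        rw [SetLike.mem_coe, LinearMap.mem_ker, LinearMap.comp_apply, LieAlgebra.ad_apply,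
          hLH, map_smul, smul_eq_mul]
        by_cases hn : n = j₀
        · have h0 : a + (n : ℂ) + 1 * ((0 : ℤ) : ℂ) = 0 := by
            rw [hn, ha]; push_cast; ring
          rw [h0, zero_mul]
        · rw [hsupp (0 + n) (by omega), mul_zero]
      have := hker hp
      rw [LinearMap.mem_ker, LinearMap.comp_apply, LieAlgebra.ad_apply] at this
      exact this
end

section
/- Let 𝒲₁⁺⁺ = span{d_i : i ∈ ℤ≥0} with [d_m, d_n] = (m−n)d_{m+n} be the Borel subalgebra of the Witt algebra, fix k ≥ 1, and let 𝔭_k = span{d_i : i ≥ k}, an ideal of 𝒲₁⁺⁺ with [𝔭_k, 𝔭_k] = 𝔭_{2k+1}. Let φ : 𝔭_k → ℂ be a nonzero Lie algebra homomorphism (so φ(d_i) = 0 for i ≥ 2k+1). Then the Whittaker annihilator (𝒲₁⁺⁺)^φ equals 𝔭_k if and only if φ(d_{2k−1}) ≠ 0 or φ(d_{2k}) ≠ 0. -/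
/-- For the Borel subalgebra `𝒲₁⁺⁺ = span{d_i : i ≥ 0}` of the Witt algebra, the ideal
`𝔭_k = span{d_i : i ≥ k}` (`k ≥ 1`) and a nonzero Lie algebra homomorphism
`φ : 𝔭_k → ℂ` (represented by a functional `Φ` vanishing on `d_i` for `i ≥ 2k+1`),
the Whittaker annihilator equals `𝔭_k` iff `φ(d_{2k-1}) ≠ 0` or `φ(d_{2k}) ≠ 0`. -/
theorem stmt15 {𝔤 : Type*} [LieRing 𝔤] [LieAlgebra ℂ 𝔤]
    (d : ℕ → 𝔤)
    (hdd : ∀ m n : ℕ, ⁅d m, d n⁆ = ((m : ℂ) - n) • d (m + n))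
    (hind : LinearIndependent ℂ d)
    (hspan : Submodule.span ℂ (Set.range d) = ⊤)
    (k : ℕ) (hk : 1 ≤ k)
    (P : Submodule ℂ 𝔤) (hP : P = Submodule.span ℂ {x | ∃ i, k ≤ i ∧ x = d i})
    (Φ : 𝔤 →ₗ[ℂ] ℂ)
    (hΦhi : ∀ i : ℕ, 2 * k + 1 ≤ i → Φ (d i) = 0)
    (hΦ0 : ∃ i, k ≤ i ∧ Φ (d i) ≠ 0) :
    {x : 𝔤 | ∀ p ∈ P, Φ ⁅x, p⁆ = 0} = (P : Set 𝔤) ↔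
      (Φ (d (2 * k - 1)) ≠ 0 ∨ Φ (d (2 * k)) ≠ 0) := by
  classical
  obtain ⟨B, hB⟩ : ∃ B : Module.Basis ℕ ℂ 𝔤, ∀ i, B i = d i :=
    ⟨Module.Basis.mk hind (by rw [hspan]), fun i => Module.Basis.mk_apply _ _ _⟩
  have hrepr_d : ∀ i, B.repr (d i) = Finsupp.single i 1 := fun i => by
    rw [← hB]; exact B.repr_self i
  have hdP : ∀ n, k ≤ n → d n ∈ P := fun n hn => by
    rw [hP]; exact Submodule.subset_span ⟨n, hn, rfl⟩
  have hx1 : ∀ x : 𝔤, x = ∑ i ∈ (B.repr x).support, B.repr x i • d i := by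
    intro x
    conv_lhs => rw [← B.linearCombination_repr x]
    rw [Finsupp.linearCombination_apply, Finsupp.sum]
    simp [hB]
  have hmemP : ∀ x : 𝔤, x ∈ P ↔ ∀ j, j < k → B.repr x j = 0 := by
    intro x
    constructor
    · intro hx j hj
      rw [hP] at hx
      induction hx using Submodule.span_induction with
      | mem y hy =>
        obtain ⟨i, hi, rfl⟩ := hy
        rw [hrepr_d, Finsupp.single_apply, if_neg (by omega)]
      | zero => simp
      | add y z _ _ hy hz => simp [hy, hz]
      | smul c y _ hy => simp [hy]
    · intro h
      rw [hx1 x]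
      refine Submodule.sum_mem _ fun i hi => ?_
      by_cases hik : k ≤ i
      · exact Submodule.smul_mem _ _ (hdP i hik)
      · simp [h i (by omega)]
  have hbr : ∀ (x : 𝔤) (n : ℕ),
      Φ ⁅x, d n⁆ = ∑ i ∈ (B.repr x).support,
        B.repr x i * (((i : ℂ) - n) * Φ (d (i + n))) := by
    intro x n
    conv_lhs => rw [hx1 x]
    have hls : ⁅∑ i ∈ (B.repr x).support, B.repr x i • d i, d n⁆ =
        ∑ i ∈ (B.repr x).support, ⁅B.repr x i • d i, d n⁆ :=
      map_sum (AddMonoidHom.mk' (fun y : 𝔤 => ⁅y, d n⁆) (fun a b => add_lie a b (d n)))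
        (fun i => B.repr x i • d i) (B.repr x).support
    rw [hls, map_sum]
    refine Finset.sum_congr rfl fun i _ => ?_
    rw [smul_lie, hdd, smul_smul, map_smul, smul_eq_mul, mul_assoc]
  have key : ∀ m : ℕ, 2 * k - 1 ≤ m → Φ (d m) ≠ 0 → (∀ i, m + 1 ≤ i → Φ (d i) = 0) →
      ∀ x : 𝔤, (∀ p ∈ P, Φ ⁅x, p⁆ = 0) → x ∈ P := by
    intro m hm hΦm hhi x hx
    rw [hmemP]
    intro j
    induction j using Nat.strong_induction_on with
    | _ j IH =>
      intro hj
      have hn : k ≤ m - j := by omega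
      have hjn : j + (m - j) = m := by omega
      have heq := hx (d (m - j)) (hdP _ hn)
      rw [hbr] at heq
      have hsingle : B.repr x j * (((j : ℂ) - (m - j : ℕ)) * Φ (d (j + (m - j)))) = 0 := by
        rw [← heq]
        refine (Finset.sum_eq_single
          (f := fun i => B.repr x i * (((i : ℂ) - ((m - j : ℕ) : ℂ)) * Φ (d (i + (m - j)))))
          j ?_ ?_).symm
        · intro i _ hij
          rcases lt_or_gt_of_ne hij with hlt | hgt
          · rw [IH i hlt (by omega)]; ring
          · rw [hhi (i + (m - j)) (by omega)]; ring
        · intro hjs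
          rw [Finsupp.notMem_support_iff.mp hjs]; ring
      rw [hjn] at hsingle
      have hcoef : ((j : ℂ) - ((m - j : ℕ) : ℂ)) ≠ 0 := by
        have hne : j ≠ m - j := by omega
        exact sub_ne_zero.mpr (by exact_mod_cast hne)
      rcases mul_eq_zero.mp hsingle with h | h
      · exact h
      · rcases mul_eq_zero.mp h with h' | h'
        · exact absurd h' hcoef
        · exact absurd h' hΦm
  constructor
  · intro hAP
    by_contra hcon
    push_neg at hcon
    obtain ⟨h1, h2⟩ := hcon
    have hmem : d (k - 1) ∈ {x : 𝔤 | ∀ p ∈ P, Φ ⁅x, p⁆ = 0} := by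
      intro p hp
      rw [hP] at hp
      induction hp using Submodule.span_induction with
      | mem y hy =>
        obtain ⟨n, hn, rfl⟩ := hy
        rw [hdd, map_smul, smul_eq_mul]
        rcases Nat.lt_or_ge (k - 1 + n) (2 * k + 1) with hlt | hge
        · have hcase : k - 1 + n = 2 * k - 1 ∨ k - 1 + n = 2 * k := by omega
          rcases hcase with h | h <;> rw [h] <;> simp [h1, h2]
        · rw [hΦhi _ hge, mul_zero]
      | zero => simp
      | add y z _ _ hy hz => simp [lie_add, hy, hz]
      | smul c y _ hy => simp [lie_smul, hy]
    rw [hAP] at hmem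
    have hz := (hmemP _).mp hmem (k - 1) (by omega)
    rw [hrepr_d, Finsupp.single_apply, if_pos rfl] at hz
    exact one_ne_zero hz
  · intro hRHS
    ext x
    simp only [Set.mem_setOf_eq, SetLike.mem_coe]
    constructor
    · intro hx
      by_cases h2 : Φ (d (2 * k)) = 0
      · have h1 : Φ (d (2 * k - 1)) ≠ 0 := by tauto
        refine key (2 * k - 1) le_rfl h1 (fun i hi => ?_) x hx
        rcases Nat.lt_or_ge i (2 * k + 1) with hlt | hge
        · have hi2 : i = 2 * k := by omega
          rw [hi2]; exact h2
        · exact hΦhi i hge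
      · exact key (2 * k) (by omega) h2 (fun i hi => hΦhi i (by omega)) x hx
    · intro hx p hp
      rw [hP] at hp
      induction hp using Submodule.span_induction with
      | mem y hy =>
        obtain ⟨n, hn, rfl⟩ := hy
        rw [hbr]
        refine Finset.sum_eq_zero fun i hi => ?_
        have hik : k ≤ i := by
          by_contra hik
          exact Finsupp.mem_support_iff.mp hi ((hmemP x).mp hx i (by omega))
        rcases Nat.lt_or_ge (i + n) (2 * k + 1) with hlt | hge
        · obtain ⟨rfl, rfl⟩ : i = k ∧ n = k := by omega
          simp
        · rw [hΦhi _ hge]; ring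
      | zero => simp
      | add y z _ _ hy hz => simp [lie_add, hy, hz]
      | smul c y _ hy => simp [lie_smul, hy]
end

section
/- Let 𝒲_n⁺ (n ≥ 2) be the Lie algebra of derivations of ℂ[t₁,…,t_n], with its ℤ-grading 𝔤_k = span{t^α ∂_i : |α| = k+1}. Let 𝔞 = 𝔤_{≥0}, 𝔭 = 𝔤_{≥1}, so [𝔭,𝔭] = 𝔤_{≥2}. Let φ : 𝔭 → ℂ be the linear map with φ(t_i²∂_i) ≠ 0 for all i = 1,…,n, φ(t^α ∂_i) = 0 for all |α| = 2 with α_i ≠ 2, and φ(𝔤_{≥2}) = 0. Then the Whittaker annihilator 𝔞^φ = {x ∈ 𝔞 : φ([x,p]) = 0 ∀p ∈ 𝔭} equals 𝔭; equivalently, no nonzero element of 𝔤₀ = span{t_i∂_j : 1 ≤ i,j ≤ n} annihilates φ. -/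
/-- For `𝒲_n⁺ = Der ℂ[t₁,…,t_n]` (`n ≥ 2`) with `D α i = t^α ∂_i`, `𝔞 = 𝔤_{≥0}`,
`𝔭 = 𝔤_{≥1}`, and `φ` (represented by `Φ`) with `φ(t_i²∂_i) ≠ 0` for all `i` and
`φ(t^α∂_i) = 0` for `|α| = 2`, `α_i ≠ 2`, and `φ(𝔤_{≥2}) = 0`: the Whittaker
annihilator `𝔞^φ` equals `𝔭`; equivalently, no nonzero element of
`𝔤₀ = span{t_i∂_j}` annihilates `φ`. -/
theorem stmt16 {𝔤 : Type*} [LieRing 𝔤] [LieAlgebra ℂ 𝔤]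
    (n : ℕ) (hn : 2 ≤ n)
    (D : (Fin n → ℕ) → Fin n → 𝔤)
    (hbr : ∀ (α β : Fin n → ℕ) (i j : Fin n),
      ⁅D α i, D β j⁆ = (β i : ℂ) • D (α + β - Pi.single i 1) j -
        (α j : ℂ) • D (α + β - Pi.single j 1) i)
    (hind : LinearIndependent ℂ (fun q : (Fin n → ℕ) × Fin n => D q.1 q.2))
    (A P : Submodule ℂ 𝔤)
    (hA : A = Submodule.span ℂ {w | ∃ α i, 1 ≤ ∑ l, α l ∧ w = D α i})
    (hP : P = Submodule.span ℂ {w | ∃ α i, 2 ≤ ∑ l, α l ∧ w = D α i})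
    (Φ : 𝔤 →ₗ[ℂ] ℂ)
    (hΦ2 : ∀ i : Fin n, Φ (D (Pi.single i 2) i) ≠ 0)
    (hΦ0 : ∀ (α : Fin n → ℕ) (i : Fin n), (∑ l, α l) = 2 → α i ≠ 2 → Φ (D α i) = 0)
    (hΦhi : ∀ (α : Fin n → ℕ) (i : Fin n), 3 ≤ ∑ l, α l → Φ (D α i) = 0) :
    {w : 𝔤 | w ∈ A ∧ ∀ p ∈ P, Φ ⁅w, p⁆ = 0} = (P : Set 𝔤) ∧
      ∀ w ∈ Submodule.span ℂ {w | ∃ i j : Fin n, w = D (Pi.single i 1) j},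
        (∀ p ∈ P, Φ ⁅w, p⁆ = 0) → w = 0 := by
  subst hA hP
  -- basic sum facts
  have hsingle_sum : ∀ (i : Fin n) (k : ℕ), ∑ l, Pi.single i k l = k := by
    intro i k; simp
  have hsub_sum : ∀ (γ : Fin n → ℕ) (i : Fin n), 1 ≤ γ i →
      (∑ l, ((γ - Pi.single i 1 : Fin n → ℕ)) l) + 1 = ∑ l, γ l := by
    intro γ i hγ
    have hle : Pi.single i 1 ≤ γ := by
      intro l
      rcases eq_or_ne l i with rfl | h
      · simpa using hγ
      · simp [Pi.single_apply, h]
    have h1 : γ - Pi.single i 1 + Pi.single i 1 = γ := tsub_add_cancel_of_le hle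
    calc (∑ l, ((γ - Pi.single i 1 : Fin n → ℕ)) l) + 1
        = ∑ l, (((γ - Pi.single i 1 : Fin n → ℕ)) l + (Pi.single i 1 : Fin n → ℕ) l) := by
          rw [Finset.sum_add_distrib, hsingle_sum]
      _ = ∑ l, γ l := by
          refine Finset.sum_congr rfl fun l _ => ?_
          conv_rhs => rw [← h1]
          rfl
  -- P annihilates P under Φ∘[,]
  have hPP : ∀ w ∈ Submodule.span ℂ {w : 𝔤 | ∃ α i, 2 ≤ ∑ l, α l ∧ w = D α i},
      ∀ p ∈ Submodule.span ℂ {w : 𝔤 | ∃ α i, 2 ≤ ∑ l, α l ∧ w = D α i}, Φ ⁅w, p⁆ = 0 := by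
    intro w hw p hp
    induction hp using Submodule.span_induction with
    | mem p hpmem =>
      induction hw using Submodule.span_induction with
      | mem x hxmem =>
        obtain ⟨α, i, hα, rfl⟩ := hxmem
        obtain ⟨β, j, hβ, rfl⟩ := hpmem
        rw [hbr, map_sub, map_smul, map_smul]
        have t1 : ∀ (α β : Fin n → ℕ) (i j : Fin n), 2 ≤ ∑ l, α l → 2 ≤ ∑ l, β l →
            ((β i : ℂ)) • Φ (D (α + β - Pi.single i 1) j) = 0 := by
          intro α β i j hα hβ
          rcases Nat.eq_zero_or_pos (β i) with h | h
          · simp [h]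
          · rw [hΦhi _ _ ?_, smul_zero]
            have h1 : 1 ≤ (α + β) i := by
              have : (α + β) i = α i + β i := rfl
              omega
            have h2 := hsub_sum (α + β) i h1
            have h3 : ∑ l, (α + β) l = (∑ l, α l) + ∑ l, β l := by
              rw [← Finset.sum_add_distrib]; rfl
            omega
        rw [t1 α β i j hα hβ, add_comm α β, t1 β α j i hβ hα, sub_zero]
      | zero => simp
      | add x y hx hy ihx ihy => rw [add_lie, map_add, ihx, ihy, add_zero]
      | smul a x hx ihx => rw [smul_lie, map_smul, ihx, smul_zero]
    | zero => simp
    | add x y hx hy ihx ihy => rw [lie_add, map_add, ihx, ihy, add_zero]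
    | smul a x hx ihx => rw [lie_smul, map_smul, ihx, smul_zero]
  -- membership of test elements in P
  have hmemP : ∀ a b : Fin n,
      D (Pi.single a 2) b ∈ Submodule.span ℂ {w : 𝔤 | ∃ α i, 2 ≤ ∑ l, α l ∧ w = D α i} :=
    fun a b => Submodule.subset_span ⟨Pi.single a 2, b, by rw [hsingle_sum], rfl⟩
  -- the key bracket values against test elements
  have hval : ∀ i j a b : Fin n,
      Φ ⁅D (Pi.single i 1) j, D (Pi.single a 2) b⁆ =
        (if i = a ∧ j = a ∧ b = a then 2 * Φ (D (Pi.single a 2) a) else 0) -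
        (if i = b ∧ j = a then Φ (D (Pi.single a 2) a) else 0) := by
    intro i j a b
    rw [hbr, map_sub, map_smul, map_smul, smul_eq_mul, smul_eq_mul]
    congr 1
    · -- first term
      by_cases hja : j = a
      · subst hja
        rw [Pi.single_eq_same]
        by_cases hia : i = j
        · subst hia
          have hidx : Pi.single i 1 + Pi.single i 2 - Pi.single i 1 = (Pi.single i 2 : Fin n → ℕ) :=
            add_tsub_cancel_left _ _
          rw [hidx]
          by_cases hbi : b = i
          · subst hbi; simp
          · rw [hΦ0 (Pi.single i 2) b (hsingle_sum i 2) (by simp [Pi.single_apply, hbi])]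
            simp [hbi]
        · have hidx : Pi.single i 1 + Pi.single j 2 - Pi.single j 1
              = (Pi.single i 1 + Pi.single j 1 : Fin n → ℕ) := by
            funext l
            simp only [Pi.sub_apply, Pi.add_apply, Pi.single_apply]
            rcases eq_or_ne l i with rfl | h1 <;> rcases eq_or_ne l j with rfl | h2 <;>
              simp_all
          rw [hidx]
          rw [hΦ0 (Pi.single i 1 + Pi.single j 1) b ?_ ?_]
          · simp [hia]
          · simp only [Pi.add_apply]
            rw [Finset.sum_add_distrib, hsingle_sum, hsingle_sum]
          · simp only [Pi.add_apply, Pi.single_apply]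
            split_ifs with h1 h2
            · exact absurd (h1.symm.trans h2) hia
            all_goals norm_num
      · rw [Pi.single_eq_of_ne hja]
        simp [hja]
    · -- second term
      by_cases hib : i = b
      · subst hib
        rw [Pi.single_eq_same]
        have hidx : Pi.single i 1 + Pi.single a 2 - Pi.single i 1 = (Pi.single a 2 : Fin n → ℕ) :=
          add_tsub_cancel_left _ _
        rw [hidx]
        by_cases hja : j = a
        · subst hja; simp
        · rw [hΦ0 (Pi.single a 2) j (hsingle_sum a 2) (by simp [Pi.single_apply, hja])]
          simp [hja]
      · rw [Pi.single_eq_of_ne (Ne.symm hib)]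
        simp [hib]
  -- main claim about 𝔤₀
  have key2 : ∀ w ∈ Submodule.span ℂ {w : 𝔤 | ∃ i j : Fin n, w = D (Pi.single i 1) j},
      (∀ p ∈ Submodule.span ℂ {w : 𝔤 | ∃ α i, 2 ≤ ∑ l, α l ∧ w = D α i}, Φ ⁅w, p⁆ = 0) →
      w = 0 := by
    intro w hw h0
    have hrange : {w : 𝔤 | ∃ i j : Fin n, w = D (Pi.single i 1) j}
        = Set.range (fun q : Fin n × Fin n => D (Pi.single q.1 1) q.2) := by
      ext x
      constructor
      · rintro ⟨i, j, rfl⟩; exact ⟨(i, j), rfl⟩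
      · rintro ⟨q, rfl⟩; exact ⟨q.1, q.2, rfl⟩
    rw [hrange] at hw
    obtain ⟨c, rfl⟩ := (Submodule.mem_span_range_iff_exists_fun ℂ).mp hw
    have hc0 : ∀ b a : Fin n, c (b, a) = 0 := by
      intro b a
      have h := h0 _ (hmemP a b)
      have hlin : ∀ (f : Fin n × Fin n → 𝔤) (p : 𝔤),
          Φ ⁅∑ q, f q, p⁆ = ∑ q, Φ ⁅f q, p⁆ := by
        intro f p
        induction (Finset.univ : Finset (Fin n × Fin n)) using Finset.induction with
        | empty => simp
        | insert _ _ hq ih => rw [Finset.sum_insert hq, Finset.sum_insert hq, add_lie, map_add, ih]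
      rw [hlin] at h
      have hre : ∀ q : Fin n × Fin n,
          Φ ⁅c q • D (Pi.single q.1 1) q.2, D (Pi.single a 2) b⁆ =
            if q = (b, a) then
              c q * (if b = a then Φ (D (Pi.single a 2) a) else -Φ (D (Pi.single a 2) a))
            else 0 := by
        rintro ⟨x, y⟩
        rw [smul_lie, map_smul, hval x y a b, smul_eq_mul]
        simp only [Prod.mk.injEq]
        rcases eq_or_ne y a with h2 | h2
        · rcases eq_or_ne x b with h1 | h1
          · rcases eq_or_ne b a with h3 | h3
            · simp [h1, h2, h3, two_mul]
            · simp [h1, h2, h3]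
          · rcases eq_or_ne x a with h4 | h4
            · simp [h2, h4, h4 ▸ h1, Ne.symm (h4 ▸ h1)]
            · simp [h1, h2, h4]
        · simp [h2]
      rw [Finset.sum_congr rfl fun q _ => hre q, Finset.sum_ite_eq' Finset.univ] at h
      simp only [Finset.mem_univ, if_true] at h
      rcases mul_eq_zero.mp h with h' | h'
      · exact h'
      · exfalso
        by_cases h3 : b = a
        · rw [if_pos h3] at h'
          exact hΦ2 a h'
        · rw [if_neg h3] at h'
          exact hΦ2 a (neg_eq_zero.mp h')
    refine Finset.sum_eq_zero fun q _ => ?_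
    rw [show c q = 0 from hc0 q.1 q.2, zero_smul]
  -- a multi-index of total degree 1 is a standard basis vector
  have hone : ∀ α : Fin n → ℕ, (∑ l, α l) = 1 → ∃ i, α = Pi.single i 1 := by
    intro α hα
    obtain ⟨i, -, hi⟩ := Finset.exists_ne_zero_of_sum_ne_zero
      (show (∑ l, α l) ≠ 0 by omega)
    have h1 := Finset.sum_erase_add Finset.univ α (Finset.mem_univ i)
    rw [hα] at h1
    have h3 : ∑ l ∈ Finset.univ.erase i, α l = 0 := by omega
    have h2 := (Finset.sum_eq_zero_iff).mp h3
    refine ⟨i, funext fun l => ?_⟩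
    rcases eq_or_ne l i with rfl | h
    · rw [Pi.single_eq_same]; omega
    · rw [Pi.single_eq_of_ne h, h2 l (Finset.mem_erase.mpr ⟨h, Finset.mem_univ l⟩)]
  constructor
  · ext w
    simp only [Set.mem_setOf_eq, SetLike.mem_coe]
    constructor
    · rintro ⟨hwA, hw0⟩
      have hsplit : Submodule.span ℂ {w : 𝔤 | ∃ α i, 1 ≤ ∑ l, α l ∧ w = D α i} ≤
          Submodule.span ℂ {w : 𝔤 | ∃ i j : Fin n, w = D (Pi.single i 1) j} ⊔
          Submodule.span ℂ {w : 𝔤 | ∃ α i, 2 ≤ ∑ l, α l ∧ w = D α i} := by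
        rw [Submodule.span_le]
        rintro x ⟨α, i, hα, rfl⟩
        rcases eq_or_lt_of_le hα with h1 | h1
        · obtain ⟨i0, rfl⟩ := hone α h1.symm
          exact Submodule.mem_sup_left (Submodule.subset_span ⟨i0, i, rfl⟩)
        · exact Submodule.mem_sup_right (Submodule.subset_span ⟨α, i, h1, rfl⟩)
      obtain ⟨x, hx, y, hy, rfl⟩ := Submodule.mem_sup.mp (hsplit hwA)
      have hx0 : x = 0 := by
        apply key2 x hx
        intro p hp
        have hxy := hw0 p hp
        rw [add_lie, map_add, hPP y hy p hp, add_zero] at hxy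
        exact hxy
      rw [hx0, zero_add]
      exact hy
    · intro hwP
      refine ⟨?_, fun p hp => hPP w hwP p hp⟩
      refine Submodule.span_mono ?_ hwP
      rintro x ⟨α, i, hα, rfl⟩
      exact ⟨α, i, by omega, rfl⟩
  · exact key2
end
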